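/- arXiv:1403.7320 — 5 statements merged into one kernel-verified Lean document; each statement's English description precedes it below -/
import Mathlib

section
/- For every c ∈ F, the linear map π_c sending a trace-zero (n+1)×(n+1) matrix E = (e_{i,j}) over F to the endomorphism Σ_{i,j=1}^{n+1} e_{i,j}·P_{i,j} of A is a homomorphism of Lie algebras from sl(n+1,F) to the Lie algebra of F-linear endomorphisms of A (with commutator bracket). In particular π_c(E_{i,j}) = x_i∘∂_j for distinct i,j ∈ {1,…,n}, π_c(E_{i,n+1}) = x_i∘(D + c·id), π_c(E_{n+1,i}) = −∂_i, π_c(E_{i,i} − E_{j,j}) = x_i∂_i − x_j∂_j for i,j ∈ {1,…,n}, and π_c(E_{n,n} − E_{n+1,n+1}) = D + c·id + x_n∂_n. -/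
open MvPolynomial

/-- Multiplication by `x i` as an `F`-linear endomorphism of `A = F[x_1,…,x_n]`. -/
noncomputable def mulX (F : Type*) [Field F] (n : ℕ) (i : Fin n) :
    Module.End F (MvPolynomial (Fin n) F) :=
  LinearMap.mulLeft F (X i)

/-- The partial derivative `∂_i` as an `F`-linear endomorphism of `A`. -/
noncomputable def pd (F : Type*) [Field F] (n : ℕ) (i : Fin n) :
    Module.End F (MvPolynomial (Fin n) F) :=
  (pderiv i).toLinearMap

/-- The Euler operator `D = Σ_s x_s ∂_s`. -/
noncomputable def Dop (F : Type*) [Field F] (n : ℕ) :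
    Module.End F (MvPolynomial (Fin n) F) :=
  ∑ s : Fin n, mulX F n s * pd F n s

/-- The projective oscillator operators `P_{i,j}` (indices `0,…,n-1` are the usual ones,
index `n` plays the role of the paper's index `n+1`). -/
noncomputable def P (F : Type*) [Field F] (n : ℕ) (c : F) (i j : Fin (n + 1)) :
    Module.End F (MvPolynomial (Fin n) F) :=
  if hi : (i : ℕ) < n then
    if hj : (j : ℕ) < n then mulX F n ⟨i, hi⟩ * pd F n ⟨j, hj⟩
    else mulX F n ⟨i, hi⟩ * (Dop F n + c • 1)
  else
    if hj : (j : ℕ) < n then -pd F n ⟨j, hj⟩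
    else -(Dop F n + c • 1)

section
variable (F : Type*) [Field F] (n : ℕ)

lemma pderiv_comm' (i j : Fin n) (p : MvPolynomial (Fin n) F) :
    pderiv i (pderiv j p) = pderiv j (pderiv i p) := by
  have hX : ∀ (a b s : Fin n), pderiv a (pderiv b (X s : MvPolynomial (Fin n) F)) = 0 := by
    intro a b s
    rcases eq_or_ne b s with h | h
    · simp [h]
    · simp [pderiv_X_of_ne h.symm]
  induction p using MvPolynomial.induction_on with
  | C a => simp
  | add p q hp hq => simp [hp, hq]
  | mul_X p s hp =>
    simp only [pderiv_mul, map_add, hp, hX]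
    ring

lemma mulX_comm (i k : Fin n) : mulX F n i * mulX F n k = mulX F n k * mulX F n i := by
  refine LinearMap.ext fun p => ?_
  simp only [mulX, Module.End.mul_apply, LinearMap.mulLeft_apply]
  ring

lemma pd_comm (i k : Fin n) : pd F n i * pd F n k = pd F n k * pd F n i := by
  refine LinearMap.ext fun p => ?_
  simp only [pd, Module.End.mul_apply, Derivation.coeFn_coe]
  exact pderiv_comm' F n i k p

lemma pd_mulX (j i : Fin n) :
    pd F n j * mulX F n i = mulX F n i * pd F n j + (if j = i then (1:F) else 0) • 1 := by
  refine LinearMap.ext fun p => ?_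
  rcases eq_or_ne j i with h | h
  · simp [pd, mulX, Module.End.mul_apply, pderiv_mul, h, mul_comm]
    exact add_comm _ _
  · simp [pd, mulX, Module.End.mul_apply, pderiv_mul, h, pderiv_X_of_ne h.symm]

lemma negone_mul' (f : Module.End F (MvPolynomial (Fin n) F)) : -1 * f = -f :=
  LinearMap.ext fun _ => rfl

lemma mul_negone' (f : Module.End F (MvPolynomial (Fin n) F)) : f * -1 = -f :=
  LinearMap.ext fun p => map_neg f p

lemma Dop_mulX (i : Fin n) :
    Dop F n * mulX F n i = mulX F n i * Dop F n + mulX F n i := by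
  have key : ∀ s : Fin n, (mulX F n s * pd F n s) * mulX F n i
      = mulX F n i * (mulX F n s * pd F n s) + (if s = i then mulX F n i else 0) := by
    intro s
    rw [mul_assoc, pd_mulX, mul_add, ← mul_assoc, mulX_comm, mul_assoc]
    congr 1
    split_ifs with h
    · subst h; simp
    · simp
  unfold Dop
  rw [Finset.sum_mul, Finset.mul_sum]
  simp_rw [key]
  rw [Finset.sum_add_distrib, Finset.sum_ite_eq' Finset.univ i (fun _ => mulX F n i)]
  simp

lemma pd_Dop (j : Fin n) :
    pd F n j * Dop F n = Dop F n * pd F n j + pd F n j := by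
  have key : ∀ s : Fin n, pd F n j * (mulX F n s * pd F n s)
      = (mulX F n s * pd F n s) * pd F n j + (if j = s then pd F n s else 0) := by
    intro s
    rw [← mul_assoc, pd_mulX, add_mul, mul_assoc, pd_comm, ← mul_assoc]
    congr 1
    split_ifs with h
    · subst h; simp
    · simp
  unfold Dop
  rw [Finset.mul_sum, Finset.sum_mul]
  simp_rw [key]
  rw [Finset.sum_add_distrib, Finset.sum_ite_eq Finset.univ j (fun s => pd F n s)]
  simp

variable (c : F)

lemma T_mulX (i : Fin n) :
    (Dop F n + c • 1) * mulX F n i = mulX F n i * (Dop F n + c • 1) + mulX F n i := by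
  rw [add_mul, Dop_mulX, mul_add, smul_mul_assoc, one_mul, mul_smul_comm, mul_one]
  abel

lemma pd_T (j : Fin n) :
    pd F n j * (Dop F n + c • 1) = (Dop F n + c • 1) * pd F n j + pd F n j := by
  rw [mul_add, pd_Dop, add_mul, smul_mul_assoc, one_mul, mul_smul_comm, mul_one]
  abel

/-- uniform "coordinate" operators: `x_i` for `i < n`, `-1` for `i = n`. -/
noncomputable def sOp (i : Fin (n + 1)) : Module.End F (MvPolynomial (Fin n) F) :=
  if h : (i : ℕ) < n then mulX F n ⟨i, h⟩ else -1

/-- uniform "derivative" operators: `∂_j` for `j < n`, `D + c` for `j = n`. -/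
noncomputable def tOp (j : Fin (n + 1)) : Module.End F (MvPolynomial (Fin n) F) :=
  if h : (j : ℕ) < n then pd F n ⟨j, h⟩ else Dop F n + c • 1

def eC (j : Fin (n + 1)) : F := if (j : ℕ) < n then 0 else 1

lemma P_eq (i j : Fin (n + 1)) : P F n c i j = sOp F n i * tOp F n c j := by
  unfold P sOp tOp
  split_ifs
  · rfl
  · rfl
  · rw [negone_mul']
  · rw [negone_mul']

lemma sOp_comm (i k : Fin (n + 1)) : sOp F n i * sOp F n k = sOp F n k * sOp F n i := by
  unfold sOp
  split_ifs
  · exact mulX_comm F n _ _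
  · rw [mul_negone', negone_mul']
  · rw [mul_negone', negone_mul']
  · rfl

lemma fin_eq_of_not_lt {i j : Fin (n + 1)} (hi : ¬ (i : ℕ) < n) (hj : ¬ (j : ℕ) < n) :
    i = j := by
  have h1 := i.isLt
  have h2 := j.isLt
  exact Fin.ext (by omega)

lemma t_s (j k : Fin (n + 1)) :
    tOp F n c j * sOp F n k
      = sOp F n k * tOp F n c j + (if j = k then (1:F) else 0) • 1 + eC F n j • sOp F n k := by
  unfold tOp sOp eC
  by_cases hj : (j : ℕ) < n
  · by_cases hk : (k : ℕ) < n
    · rw [dif_pos hj, dif_pos hk, if_pos hj, pd_mulX]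
      rcases eq_or_ne j k with h | h
      · subst h
        simp
      · have h' : (⟨(j:ℕ), hj⟩ : Fin n) ≠ ⟨(k:ℕ), hk⟩ := by
          simp only [ne_eq, Fin.mk.injEq]
          exact fun hc => h (Fin.ext hc)
        simp [h, h']
    · have h : j ≠ k := fun h => hk (h ▸ hj)
      rw [dif_pos hj, dif_neg hk, if_pos hj, if_neg h, mul_negone', negone_mul']
      simp
  · by_cases hk : (k : ℕ) < n
    · have h : j ≠ k := fun h => hj (h ▸ hk)
      rw [dif_neg hj, dif_pos hk, if_neg hj, if_neg h, T_mulX]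
      simp
    · have h : j = k := fin_eq_of_not_lt n hj hk
      rw [dif_neg hj, dif_neg hk, if_neg hj, if_pos h, mul_negone', negone_mul',
        one_smul, one_smul]
      abel

lemma t_t (j l : Fin (n + 1)) :
    tOp F n c j * tOp F n c l
      = tOp F n c l * tOp F n c j + eC F n l • tOp F n c j - eC F n j • tOp F n c l := by
  unfold tOp eC
  by_cases hj : (j : ℕ) < n
  · by_cases hl : (l : ℕ) < n
    · rw [dif_pos hj, dif_pos hl, if_pos hj, if_pos hl, pd_comm]
      simp
    · rw [dif_pos hj, dif_neg hl, if_pos hj, if_neg hl, pd_T]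
      simp
  · by_cases hl : (l : ℕ) < n
    · rw [dif_neg hj, dif_pos hl, if_neg hj, if_pos hl, pd_T]
      simp
    · rw [dif_neg hj, dif_neg hl, if_neg hj, if_neg hl, one_smul]
      abel

set_option maxHeartbeats 1000000 in
/-- the key algebraic identity, in any associative algebra. -/
lemma key_ring {R : Type*} [Ring R] [Module F R] [SMulCommClass F R R] [IsScalarTower F R R]
    (a b x y : R) (d1 d2 e1 e2 : F)
    (hab : a * b = b * a)
    (hxb : x * b = b * x + d1 • 1 + e1 • b)
    (hya : y * a = a * y + d2 • 1 + e2 • a)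
    (hxy : x * y = y * x + e2 • x - e1 • y) :
    a * x * (b * y) - b * y * (a * x) = d1 • (a * y) - d2 • (b * x) := by
  have hcom : ∀ z : R, a * (b * z) = b * (a * z) := fun z => by
    rw [← mul_assoc, hab, mul_assoc]
  rw [mul_assoc a x (b * y), ← mul_assoc x b y, hxb, mul_assoc b y (a * x),
    ← mul_assoc y a x, hya]
  simp only [add_mul, sub_mul, mul_add, mul_sub, smul_mul_assoc, mul_smul_comm, one_mul,
    mul_one, smul_add, smul_sub, mul_assoc]
  rw [hxy]
  simp only [mul_add, mul_sub, mul_smul_comm, smul_add, smul_sub]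
  simp only [hcom]
  abel

lemma P_brak (i j k l : Fin (n + 1)) :
    P F n c i j * P F n c k l - P F n c k l * P F n c i j
      = (if j = k then (1:F) else 0) • P F n c i l
        - (if l = i then (1:F) else 0) • P F n c k j := by
  rw [P_eq, P_eq, P_eq, P_eq]
  exact key_ring F (sOp F n i) (sOp F n k) (tOp F n c j) (tOp F n c l) _ _ _ _
    (sOp_comm F n i k) (t_s F n c j k) (t_s F n c l i) (t_t F n c j l)

end

section sums

variable {α M : Type*} [Fintype α] [AddCommMonoid M]

lemma sum_comm4 (f : α → α → α → α → M) :
    ∑ i : α, ∑ j : α, ∑ k : α, ∑ l : α, f i j k l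
      = ∑ k : α, ∑ l : α, ∑ i : α, ∑ j : α, f i j k l := by
  calc ∑ i : α, ∑ j : α, ∑ k : α, ∑ l : α, f i j k l
      = ∑ i : α, ∑ k : α, ∑ j : α, ∑ l : α, f i j k l :=
        Finset.sum_congr rfl fun i _ => Finset.sum_comm
    _ = ∑ k : α, ∑ i : α, ∑ j : α, ∑ l : α, f i j k l := Finset.sum_comm
    _ = ∑ k : α, ∑ i : α, ∑ l : α, ∑ j : α, f i j k l :=
        Finset.sum_congr rfl fun k _ => Finset.sum_congr rfl fun i _ => Finset.sum_comm
    _ = ∑ k : α, ∑ l : α, ∑ i : α, ∑ j : α, f i j k l :=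
        Finset.sum_congr rfl fun k _ => Finset.sum_comm

end sums

section piL

variable (F : Type*) [Field F] (n : ℕ) (c : F)

noncomputable def piL : Matrix (Fin (n + 1)) (Fin (n + 1)) F →ₗ[F]
    Module.End F (MvPolynomial (Fin n) F) where
  toFun E := ∑ i : Fin (n + 1), ∑ j : Fin (n + 1), E i j • P F n c i j
  map_add' E E' := by
    simp [add_smul, Finset.sum_add_distrib]
  map_smul' a E := by
    simp [smul_smul, Finset.smul_sum]

lemma piL_apply (E : Matrix (Fin (n + 1)) (Fin (n + 1)) F) :
    piL F n c E = ∑ i : Fin (n + 1), ∑ j : Fin (n + 1), E i j • P F n c i j := rfl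

lemma piL_mul_expand (Xm Ym : Matrix (Fin (n + 1)) (Fin (n + 1)) F) :
    piL F n c Xm * piL F n c Ym
      = ∑ i : Fin (n + 1), ∑ j : Fin (n + 1), ∑ k : Fin (n + 1), ∑ l : Fin (n + 1),
          (Xm i j * Ym k l) • (P F n c i j * P F n c k l) := by
  rw [piL_apply, piL_apply, Finset.sum_mul]
  refine Finset.sum_congr rfl fun i _ => ?_
  rw [Finset.sum_mul]
  refine Finset.sum_congr rfl fun j _ => ?_
  rw [Finset.mul_sum]
  refine Finset.sum_congr rfl fun k _ => ?_
  rw [Finset.mul_sum]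
  refine Finset.sum_congr rfl fun l _ => ?_
  rw [smul_mul_assoc, mul_smul_comm, smul_smul]

lemma sum_comm3 {M : Type*} [AddCommMonoid M] (f : Fin (n+1) → Fin (n+1) → Fin (n+1) → M) :
    ∑ i : Fin (n+1), ∑ j : Fin (n+1), ∑ k : Fin (n+1), f i j k
      = ∑ k : Fin (n+1), ∑ j : Fin (n+1), ∑ i : Fin (n+1), f i j k := by
  calc ∑ i : Fin (n+1), ∑ j : Fin (n+1), ∑ k : Fin (n+1), f i j k
      = ∑ j : Fin (n+1), ∑ i : Fin (n+1), ∑ k : Fin (n+1), f i j k := Finset.sum_comm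
    _ = ∑ j : Fin (n+1), ∑ k : Fin (n+1), ∑ i : Fin (n+1), f i j k :=
        Finset.sum_congr rfl fun j _ => Finset.sum_comm
    _ = ∑ k : Fin (n+1), ∑ j : Fin (n+1), ∑ i : Fin (n+1), f i j k := Finset.sum_comm

lemma piL_bracket (Xm Ym : Matrix (Fin (n + 1)) (Fin (n + 1)) F) :
    piL F n c (Xm * Ym - Ym * Xm)
      = piL F n c Xm * piL F n c Ym - piL F n c Ym * piL F n c Xm := by
  have step : ∀ i j k l : Fin (n+1), (Xm i j * Ym k l) • (P F n c i j * P F n c k l)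
      - (Xm i j * Ym k l) • (P F n c k l * P F n c i j)
      = (if j = k then (Xm i j * Ym k l) • P F n c i l else 0)
        - (if l = i then (Xm i j * Ym k l) • P F n c k j else 0) := by
    intro i j k l
    rw [← smul_sub (Xm i j * Ym k l) (P F n c i j * P F n c k l) (P F n c k l * P F n c i j),
      P_brak]
    split_ifs <;> module
  have reidx : ∑ i : Fin (n + 1), ∑ j : Fin (n + 1), ∑ k : Fin (n + 1), ∑ l : Fin (n + 1),
          (Ym i j * Xm k l) • (P F n c i j * P F n c k l)
      = ∑ i : Fin (n + 1), ∑ j : Fin (n + 1), ∑ k : Fin (n + 1), ∑ l : Fin (n + 1),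
          (Xm i j * Ym k l) • (P F n c k l * P F n c i j) := by
    rw [sum_comm4]
    exact Finset.sum_congr rfl fun i _ => Finset.sum_congr rfl fun j _ =>
      Finset.sum_congr rfl fun k _ => Finset.sum_congr rfl fun l _ => by rw [mul_comm]
  have h1 : ∑ i : Fin (n+1), ∑ j : Fin (n+1), ∑ k : Fin (n+1), ∑ l : Fin (n+1),
        (if j = k then (Xm i j * Ym k l) • P F n c i l else 0) = piL F n c (Xm * Ym) := by
    rw [piL_apply]
    refine Finset.sum_congr rfl fun i _ => ?_
    calc ∑ j : Fin (n+1), ∑ k : Fin (n+1), ∑ l : Fin (n+1),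
          (if j = k then (Xm i j * Ym k l) • P F n c i l else 0)
        = ∑ j : Fin (n+1), ∑ l : Fin (n+1), ∑ k : Fin (n+1),
            (if j = k then (Xm i j * Ym k l) • P F n c i l else 0) :=
          Finset.sum_congr rfl fun j _ => Finset.sum_comm
      _ = ∑ j : Fin (n+1), ∑ l : Fin (n+1), (Xm i j * Ym j l) • P F n c i l := by
          refine Finset.sum_congr rfl fun j _ => Finset.sum_congr rfl fun l _ => ?_
          rw [Finset.sum_ite_eq]
          simp
      _ = ∑ l : Fin (n+1), ∑ j : Fin (n+1), (Xm i j * Ym j l) • P F n c i l :=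
          Finset.sum_comm
      _ = ∑ l : Fin (n+1), ((Xm * Ym) i l) • P F n c i l := by
          refine Finset.sum_congr rfl fun l _ => ?_
          rw [Matrix.mul_apply, Finset.sum_smul]
  have h2 : ∑ i : Fin (n+1), ∑ j : Fin (n+1), ∑ k : Fin (n+1), ∑ l : Fin (n+1),
        (if l = i then (Xm i j * Ym k l) • P F n c k j else 0) = piL F n c (Ym * Xm) := by
    rw [piL_apply]
    calc ∑ i : Fin (n+1), ∑ j : Fin (n+1), ∑ k : Fin (n+1), ∑ l : Fin (n+1),
          (if l = i then (Xm i j * Ym k l) • P F n c k j else 0)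
        = ∑ i : Fin (n+1), ∑ j : Fin (n+1), ∑ k : Fin (n+1),
            (Xm i j * Ym k i) • P F n c k j := by
          refine Finset.sum_congr rfl fun i _ => Finset.sum_congr rfl fun j _ =>
            Finset.sum_congr rfl fun k _ => ?_
          rw [Finset.sum_ite_eq']
          simp
      _ = ∑ k : Fin (n+1), ∑ j : Fin (n+1), ∑ i : Fin (n+1),
            (Xm i j * Ym k i) • P F n c k j := sum_comm3 n _
      _ = ∑ k : Fin (n+1), ∑ j : Fin (n+1), ((Ym * Xm) k j) • P F n c k j := by
          refine Finset.sum_congr rfl fun k _ => Finset.sum_congr rfl fun j _ => ?_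
          rw [Matrix.mul_apply, Finset.sum_smul]
          exact Finset.sum_congr rfl fun i _ => by rw [mul_comm]
  rw [piL_mul_expand, piL_mul_expand, reidx]
  simp only [← Finset.sum_sub_distrib]
  simp only [step]
  simp only [Finset.sum_sub_distrib]
  rw [map_sub, h1, h2]

end piL

attribute [local instance 100] LieRing.ofAssociativeRing

/-- for every `c ∈ F`, `E ↦ Σ_{i,j} e_{i,j} • P_{i,j}` is a Lie algebra
homomorphism from `sl(n+1,F)` to the endomorphisms of `A` with the commutator bracket. -/
theorem stmt_0 (F : Type*) [Field F] [CharZero F] (n : ℕ) (hn : 2 ≤ n) (c : F) :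
    ∃ π : ↥(LieAlgebra.SpecialLinear.sl (Fin (n + 1)) F) →ₗ⁅F⁆
        Module.End F (MvPolynomial (Fin n) F),
      ∀ E : ↥(LieAlgebra.SpecialLinear.sl (Fin (n + 1)) F),
        π E = ∑ i : Fin (n + 1), ∑ j : Fin (n + 1), (E.val i j) • P F n c i j := by
  classical
  set f : ↥(LieAlgebra.SpecialLinear.sl (Fin (n + 1)) F) →ₗ[F]
      Module.End F (MvPolynomial (Fin n) F) :=
    (piL F n c).comp
      (LieSubalgebra.toSubmodule (LieAlgebra.SpecialLinear.sl (Fin (n + 1)) F)).subtype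
    with hf
  refine ⟨{ toLinearMap := f, map_lie' := ?_ }, fun E => rfl⟩
  intro x y
  show piL F n c (⁅x, y⁆ : ↥(LieAlgebra.SpecialLinear.sl (Fin (n + 1)) F)).val
    = ⁅piL F n c x.val, piL F n c y.val⁆
  rw [Ring.lie_def, LieAlgebra.SpecialLinear.sl_bracket, piL_bracket]
end

section
/- (i) If c ∈ F is not of the form −k·1_F for any nonnegative integer k, then the only F-linear subspaces of A invariant under all operators P_{i,j} (i ≠ j, i,j ∈ {1,…,n+1}) and P_{i,i} − P_{j,j} (i,j ∈ {1,…,n+1}) are {0} and A. (ii) If c = −ℓ·1_F with ℓ a nonnegative integer, then the subspace A_(ℓ) of polynomials of total degree at most ℓ is invariant under all of these operators, and the F-linear subspaces of A invariant under all of them are exactly {0}, A_(ℓ) and A. -/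
open MvPolynomial

set_option linter.unusedSectionVars false

section Aux

open Finsupp

variable {F : Type*} [Field F] [CharZero F] {n : ℕ}

/-- total degree of an exponent vector -/
def dg (α : Fin n →₀ ℕ) : ℕ := ∑ s, α s

lemma dg_sum (α : Fin n →₀ ℕ) : (α.sum fun _ e => e) = dg α :=
  Finsupp.sum_fintype _ _ (fun _ => rfl)

lemma mulX_mon (i : Fin n) (α : Fin n →₀ ℕ) (a : F) :
    mulX F n i (monomial α a) = monomial (α + Finsupp.single i 1) a := by
  simp [mulX, LinearMap.mulLeft_apply, X, monomial_mul, add_comm]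

lemma pd_mon (i : Fin n) (α : Fin n →₀ ℕ) (a : F) :
    pd F n i (monomial α a) = monomial (α - Finsupp.single i 1) (a * α i) := by
  simp [pd, pderiv_monomial]

lemma move_mon (i j : Fin n) (α : Fin n →₀ ℕ) (a : F) :
    (mulX F n i * pd F n j) (monomial α a)
      = (α j : F) • monomial (α - Finsupp.single j 1 + Finsupp.single i 1) a := by
  rw [Module.End.mul_apply, pd_mon, mulX_mon, smul_monomial]
  rw [smul_eq_mul, mul_comm]

lemma N_mon (i : Fin n) (α : Fin n →₀ ℕ) (a : F) :
    (mulX F n i * pd F n i) (monomial α a) = (α i : F) • monomial α a := by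
  rw [move_mon]
  rcases Nat.eq_zero_or_pos (α i) with h | h
  · simp [h]
  · have : α - Finsupp.single i 1 + Finsupp.single i 1 = α := by
      ext s
      rcases eq_or_ne s i with rfl | hs
      · simp [Nat.sub_add_cancel h]
      · simp [Finsupp.single_apply, Ne.symm hs]
    rw [this]

lemma D_mon (α : Fin n →₀ ℕ) (a : F) :
    Dop F n (monomial α a) = (dg α : F) • monomial α a := by
  rw [Dop]
  rw [LinearMap.sum_apply]
  simp only [N_mon]
  rw [← Finset.sum_smul]
  congr 1
  rw [dg]
  push_cast
  rfl

lemma raise_mon (c : F) (i : Fin n) (α : Fin n →₀ ℕ) (a : F) :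
    (mulX F n i * (Dop F n + c • 1)) (monomial α a)
      = ((dg α : F) + c) • monomial (α + Finsupp.single i 1) a := by
  rw [Module.End.mul_apply, LinearMap.add_apply, D_mon, LinearMap.smul_apply,
    Module.End.one_apply, map_add, map_smul, map_smul, mulX_mon, ← add_smul]

lemma coeff_N (i : Fin n) (f : MvPolynomial (Fin n) F) (α : Fin n →₀ ℕ) :
    coeff α ((mulX F n i * pd F n i) f) = (α i : F) * coeff α f := by
  conv_lhs => rw [← f.support_sum_monomial_coeff, map_sum]
  rw [coeff_sum]
  simp only [N_mon, coeff_smul, coeff_monomial, smul_eq_mul]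
  rw [Finset.sum_eq_single α (fun β _ hβ => by simp [hβ]) (fun h => by
    simp [MvPolynomial.notMem_support_iff.mp h])]
  simp

/-- mem of restrictTotalDegree via exponents -/
lemma mem_rtd_iff (ℓ : ℕ) (f : MvPolynomial (Fin n) F) :
    f ∈ restrictTotalDegree (Fin n) F ℓ ↔ ∀ α ∈ f.support, dg α ≤ ℓ := by
  rw [mem_restrictTotalDegree, totalDegree, Finset.sup_le_iff]
  simp only [dg_sum]

lemma mon_mem_rtd {ℓ : ℕ} {α : Fin n →₀ ℕ} (h : dg α ≤ ℓ) (a : F) :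
    monomial α a ∈ restrictTotalDegree (Fin n) F ℓ := by
  rw [mem_rtd_iff]
  intro β hβ
  classical
  rw [MvPolynomial.support_monomial] at hβ
  split_ifs at hβ
  · simp at hβ
  · simp only [Finset.mem_singleton] at hβ
    exact hβ ▸ h

lemma sum_eq_of_two {i j : Fin n} (hij : i ≠ j) (γ δ : Fin n → ℕ)
    (hpair : γ i + γ j = δ i + δ j) (hoth : ∀ s, s ≠ i → s ≠ j → γ s = δ s) :
    ∑ s, γ s = ∑ s, δ s := by
  classical
  have h1 : ∀ f : Fin n → ℕ, ∑ s, f s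
      = (f i + f j) + ∑ s ∈ Finset.univ.filter (fun s => ¬(s = i ∨ s = j)), f s := by
    intro f
    rw [← Finset.sum_filter_add_sum_filter_not Finset.univ (fun s => s = i ∨ s = j)]
    congr 1
    have he : Finset.univ.filter (fun s => s = i ∨ s = j) = {i, j} := by
      ext s; simp
    rw [he, Finset.sum_pair hij]
  rw [h1 γ, h1 δ, hpair]
  congr 1
  refine Finset.sum_congr rfl (fun s hs => ?_)
  simp only [Finset.mem_filter, not_or] at hs
  exact hoth s hs.2.1 hs.2.2

section W
variable {W : Submodule F (MvPolynomial (Fin n) F)}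

/-- If W is invariant under all N_i = x_i ∂_i, every exponent in the support of an element
of W yields a monomial in W. -/
lemma mon_mem_of_mem (hN : ∀ i : Fin n, ∀ f ∈ W, (mulX F n i * pd F n i) f ∈ W) :
    ∀ f ∈ W, ∀ α ∈ f.support, monomial α (1 : F) ∈ W := by
  suffices H : ∀ N : ℕ, ∀ f, f.support.card ≤ N → f ∈ W → ∀ α ∈ f.support,
      monomial α (1 : F) ∈ W by
    intro f hf α hα; exact H f.support.card f le_rfl hf α hα
  intro N
  induction N with
  | zero => intro f hcard _ α hα
            rw [Nat.le_zero, Finset.card_eq_zero] at hcard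
            rw [hcard] at hα; simp at hα
  | succ N ih =>
    intro f hcard hf α hα
    classical
    by_cases hone : f.support ⊆ {α}
    · -- f is a monomial
      have hfa : f = monomial α (coeff α f) := by
        conv_lhs => rw [← f.support_sum_monomial_coeff]
        rw [Finset.sum_subset hone (fun x _ hx => by
          rw [MvPolynomial.notMem_support_iff.mp hx, map_zero]), Finset.sum_singleton]
      have hc : coeff α f ≠ 0 := MvPolynomial.mem_support_iff.mp hα
      obtain ⟨a, ha, hfa'⟩ : ∃ a : F, a ≠ 0 ∧ f = monomial α a := ⟨coeff α f, hc, hfa⟩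
      have h1 : monomial α (1 : F) = a⁻¹ • f := by
        rw [hfa', smul_monomial, smul_eq_mul, inv_mul_cancel₀ ha]
      rw [h1]
      exact W.smul_mem _ hf
    · obtain ⟨β, hβ, hβα⟩ : ∃ β ∈ f.support, β ≠ α := by
        by_contra h
        push_neg at h
        exact hone (fun x hx => Finset.mem_singleton.mpr (h x hx))
      obtain ⟨i, hi⟩ : ∃ i, α i ≠ β i := by
        by_contra h
        push_neg at h
        exact hβα (Finsupp.ext fun s => (h s).symm)
      set g := (mulX F n i * pd F n i) f - (β i : F) • f with hg
      have hgW : g ∈ W := W.sub_mem (hN i f hf) (W.smul_mem _ hf)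
      have hcoe : ∀ γ, coeff γ g = ((γ i : F) - (β i : F)) * coeff γ f := by
        intro γ
        rw [hg, MvPolynomial.coeff_sub, MvPolynomial.coeff_smul, coeff_N, smul_eq_mul]
        ring
      have hsub : g.support ⊆ f.support := by
        intro γ hγ
        rw [MvPolynomial.mem_support_iff] at hγ ⊢
        intro h0; exact hγ (by rw [hcoe, h0, mul_zero])
      have hβg : β ∉ g.support := by
        rw [MvPolynomial.notMem_support_iff, hcoe]; ring
      have hαg : α ∈ g.support := by
        rw [MvPolynomial.mem_support_iff, hcoe]
        exact mul_ne_zero (sub_ne_zero.mpr (fun h => hi (Nat.cast_injective h)))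
          (MvPolynomial.mem_support_iff.mp hα)
      have hlt : g.support.card < f.support.card :=
        Finset.card_lt_card ⟨hsub, fun h => hβg (h hβ)⟩
      exact ih g (by omega) hgW α hαg

/-- shuffling: monomials of equal degree -/
lemma shuffle (hmove : ∀ i j : Fin n, i ≠ j → ∀ f ∈ W, (mulX F n i * pd F n j) f ∈ W) :
    ∀ α β : Fin n →₀ ℕ, dg β = dg α → monomial α (1 : F) ∈ W → monomial β (1 : F) ∈ W := by
  suffices H : ∀ m : ℕ, ∀ α β : Fin n →₀ ℕ, (∑ s, (β s - α s)) ≤ m → dg β = dg α →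
      monomial α (1 : F) ∈ W → monomial β (1 : F) ∈ W by
    intro α β hd hα; exact H _ α β le_rfl hd hα
  intro m
  induction m with
  | zero =>
    intro α β hm hd hα
    have hle : ∀ s, β s ≤ α s := by
      intro s
      have := Finset.sum_eq_zero_iff.mp (Nat.le_zero.mp hm) s (Finset.mem_univ s)
      omega
    have : β = α := by
      ext s
      by_contra hne
      have hlt : β s < α s := lt_of_le_of_ne (hle s) hne
      have : (∑ t, β t) < ∑ t, α t :=
        Finset.sum_lt_sum (fun t _ => hle t) ⟨s, Finset.mem_univ s, hlt⟩
      rw [show (∑ t, β t) = dg β from rfl, show (∑ t, α t) = dg α from rfl, hd] at this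
      omega
    rwa [this]
  | succ m ih =>
    intro α β hm hd hα
    by_cases hle : ∀ s, β s ≤ α s
    · -- same argument as base: β = α
      have : β = α := by
        ext s
        by_contra hne
        have hlt : β s < α s := lt_of_le_of_ne (hle s) hne
        have : (∑ t, β t) < ∑ t, α t :=
          Finset.sum_lt_sum (fun t _ => hle t) ⟨s, Finset.mem_univ s, hlt⟩
        rw [show (∑ t, β t) = dg β from rfl, show (∑ t, α t) = dg α from rfl, hd] at this
        omega
      rwa [this]
    · push_neg at hle
      obtain ⟨i, hi⟩ := hle
      obtain ⟨j, hj⟩ : ∃ j, β j < α j := by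
        by_contra h
        push_neg at h
        have : (∑ t, α t) < ∑ t, β t :=
          Finset.sum_lt_sum (fun t _ => h t) ⟨i, Finset.mem_univ i, hi⟩
        rw [show (∑ t, β t) = dg β from rfl, show (∑ t, α t) = dg α from rfl, hd] at this
        omega
      have hij : i ≠ j := fun h => by rw [h] at hi; omega
      set α' : Fin n →₀ ℕ := α - Finsupp.single j 1 + Finsupp.single i 1 with hα'
      have hii : α' i = α i + 1 := by
        simp [hα', Finsupp.single_apply, Ne.symm hij]
      have hjj : α' j = α j - 1 := by
        simp [hα', Finsupp.single_apply, hij]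
      have hoth : ∀ s, s ≠ i → s ≠ j → α' s = α s := by
        intro s hsi hsj
        simp [hα', Finsupp.single_apply, (show ¬ j = s from fun h => hsj h.symm),
          (show ¬ i = s from fun h => hsi h.symm)]
      have hd' : dg α' = dg α :=
        sum_eq_of_two hij (α' ·) (α ·) (by show α' i + α' j = α i + α j; omega) hoth
      have hmem' : monomial α' (1 : F) ∈ W := by
        have h0 := hmove i j hij (monomial α 1) hα
        rw [move_mon] at h0
        have hαj : (α j : F) ≠ 0 := Nat.cast_ne_zero.mpr (by omega)
        have h2 := W.smul_mem (α j : F)⁻¹ h0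
        rwa [smul_smul, inv_mul_cancel₀ hαj, one_smul] at h2
      have hmlt : (∑ s, (β s - α' s)) < ∑ s, (β s - α s) := by
        refine Finset.sum_lt_sum (fun s _ => ?_) ⟨i, Finset.mem_univ i, ?_⟩
        · rcases eq_or_ne s i with rfl | hsi
          · omega
          · rcases eq_or_ne s j with rfl | hsj
            · omega
            · rw [hoth s hsi hsj]
        · omega
      exact ih α' β (by omega) (by rw [hd, hd']) hmem'

variable {c : F}

lemma lower_mon (hpd : ∀ j : Fin n, ∀ f ∈ W, pd F n j f ∈ W) {α : Fin n →₀ ℕ} {i : Fin n}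
    (h : 0 < α i) (hα : monomial α (1 : F) ∈ W) :
    monomial (α - Finsupp.single i 1) (1 : F) ∈ W := by
  have h0 := hpd i _ hα
  rw [pd_mon] at h0
  have h1 : monomial (α - Finsupp.single i 1) ((1:F) * (α i : ℕ)) =
      (α i : F) • monomial (α - Finsupp.single i 1) (1 : F) := by
    rw [smul_monomial, one_mul, smul_eq_mul, mul_one]
  rw [h1] at h0
  have hne : (α i : F) ≠ 0 := Nat.cast_ne_zero.mpr (by omega)
  have h2 := W.smul_mem (α i : F)⁻¹ h0
  rwa [smul_smul, inv_mul_cancel₀ hne, one_smul] at h2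

lemma dg_add (α β : Fin n →₀ ℕ) : dg (α + β) = dg α + dg β := by
  simp [dg, Finset.sum_add_distrib]

lemma dg_single (i : Fin n) (k : ℕ) : dg (Finsupp.single i k) = k := by
  simp [dg, Finsupp.single_apply]

lemma lower_single (hpd : ∀ j : Fin n, ∀ f ∈ W, pd F n j f ∈ W) (i0 : Fin n) :
    ∀ k : ℕ, ∀ β : Fin n →₀ ℕ,
      monomial (β + Finsupp.single i0 k) (1 : F) ∈ W → monomial β (1 : F) ∈ W := by
  intro k
  induction k with
  | zero => intro β h; simpa using h
  | succ k ih =>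
    intro β h
    have h1 : 0 < (β + Finsupp.single i0 (k+1)) i0 := by simp
    have h2 := lower_mon hpd h1 h
    have heq : (β + Finsupp.single i0 (k+1)) - Finsupp.single i0 1
        = β + Finsupp.single i0 k := by
      ext s
      rw [Finsupp.tsub_apply, Finsupp.add_apply, Finsupp.add_apply, Finsupp.single_apply,
        Finsupp.single_apply, Finsupp.single_apply]
      split_ifs <;> omega
    rw [heq] at h2
    exact ih β h2

lemma raise_mon_mem (hraise : ∀ i : Fin n, ∀ f ∈ W, (mulX F n i * (Dop F n + c • 1)) f ∈ W)
    {α : Fin n →₀ ℕ} (i : Fin n) (h : (dg α : F) + c ≠ 0) (hα : monomial α (1 : F) ∈ W) :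
    monomial (α + Finsupp.single i 1) (1 : F) ∈ W := by
  have h0 := hraise i _ hα
  rw [raise_mon] at h0
  have h2 := W.smul_mem ((dg α : F) + c)⁻¹ h0
  rwa [smul_smul, inv_mul_cancel₀ h, one_smul] at h2

lemma raise_single (hraise : ∀ i : Fin n, ∀ f ∈ W, (mulX F n i * (Dop F n + c • 1)) f ∈ W)
    (i0 : Fin n) {γ : Fin n →₀ ℕ} (hγ : monomial γ (1 : F) ∈ W) :
    ∀ m : ℕ, (∀ e : ℕ, dg γ ≤ e → e < dg γ + m → (e : F) + c ≠ 0) →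
      monomial (γ + Finsupp.single i0 m) (1 : F) ∈ W := by
  intro m
  induction m with
  | zero => intro _; simpa using hγ
  | succ m ih =>
    intro hok
    have h1 := ih (fun e he1 he2 => hok e he1 (by omega))
    have hne : (dg (γ + Finsupp.single i0 m) : F) + c ≠ 0 := by
      rw [dg_add, dg_single]
      exact hok (dg γ + m) (by omega) (by omega)
    have h2 := raise_mon_mem hraise i0 hne h1
    rwa [add_assoc, ← Finsupp.single_add] at h2

lemma mem_le_deg (hmove : ∀ i j : Fin n, i ≠ j → ∀ f ∈ W, (mulX F n i * pd F n j) f ∈ W)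
    (hpd : ∀ j : Fin n, ∀ f ∈ W, pd F n j f ∈ W) (i0 : Fin n) {α β : Fin n →₀ ℕ}
    (h : dg β ≤ dg α) (hα : monomial α (1 : F) ∈ W) : monomial β (1 : F) ∈ W := by
  have h1 : dg (β + Finsupp.single i0 (dg α - dg β)) = dg α := by
    rw [dg_add, dg_single]; omega
  exact lower_single hpd i0 _ β (shuffle hmove α _ h1 hα)

lemma w_eq_top (h : ∀ β : Fin n →₀ ℕ, monomial β (1 : F) ∈ W) : W = ⊤ := by
  rw [Submodule.eq_top_iff']
  intro f
  rw [← f.support_sum_monomial_coeff]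
  refine Submodule.sum_mem _ (fun β _ => ?_)
  have h1 : monomial β (coeff β f) = (coeff β f) • monomial β (1 : F) := by
    rw [smul_monomial, smul_eq_mul, mul_one]
  rw [h1]
  exact W.smul_mem _ (h β)

lemma rtd_le {ℓ : ℕ} (h : ∀ β : Fin n →₀ ℕ, dg β ≤ ℓ → monomial β (1 : F) ∈ W) :
    restrictTotalDegree (Fin n) F ℓ ≤ W := by
  intro f hf
  rw [← f.support_sum_monomial_coeff]
  refine Submodule.sum_mem _ (fun β hβ => ?_)
  have h1 : monomial β (coeff β f) = (coeff β f) • monomial β (1 : F) := by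
    rw [smul_monomial, smul_eq_mul, mul_one]
  rw [h1]
  exact W.smul_mem _ (h β ((mem_rtd_iff ℓ f).mp hf β hβ))

end W

section Punfold

variable (c : F)

lemma P_cc (i j : Fin n) : P F n c i.castSucc j.castSucc = mulX F n i * pd F n j := by
  simp only [P, Fin.coe_castSucc, Fin.eta, dif_pos i.isLt, dif_pos j.isLt]

lemma P_cl (i : Fin n) : P F n c i.castSucc (Fin.last n) = mulX F n i * (Dop F n + c • 1) := by
  simp only [P, Fin.coe_castSucc, Fin.val_last, Fin.eta, dif_pos i.isLt, dif_neg (lt_irrefl n)]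

lemma P_lc (j : Fin n) : P F n c (Fin.last n) j.castSucc = -pd F n j := by
  simp only [P, Fin.coe_castSucc, Fin.val_last, Fin.eta, dif_pos j.isLt, dif_neg (lt_irrefl n)]

lemma P_ll : P F n c (Fin.last n) (Fin.last n) = -(Dop F n + c • 1) := by
  simp only [P, Fin.val_last, dif_neg (lt_irrefl n)]

end Punfold


section Derive

variable {c : F} {W : Submodule F (MvPolynomial (Fin n) F)}
variable (hW1 : ∀ i j : Fin (n + 1), i ≠ j → ∀ f ∈ W, P F n c i j f ∈ W)
variable (hW2 : ∀ i j : Fin (n + 1), ∀ f ∈ W, (P F n c i i - P F n c j j) f ∈ W)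

include hW1 in
lemma hmove_of : ∀ i j : Fin n, i ≠ j → ∀ f ∈ W, (mulX F n i * pd F n j) f ∈ W := by
  intro i j hij f hf
  have h := hW1 i.castSucc j.castSucc (fun h => hij (Fin.castSucc_injective n h)) f hf
  rwa [P_cc] at h

include hW1 in
lemma hpd_of : ∀ j : Fin n, ∀ f ∈ W, pd F n j f ∈ W := by
  intro j f hf
  have h := hW1 (Fin.last n) j.castSucc (Fin.castSucc_lt_last j).ne' f hf
  rw [P_lc, LinearMap.neg_apply] at h
  simpa using W.neg_mem h

include hW1 in
lemma hraise_of : ∀ i : Fin n, ∀ f ∈ W, (mulX F n i * (Dop F n + c • 1)) f ∈ W := by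
  intro i f hf
  have h := hW1 i.castSucc (Fin.last n) (Fin.castSucc_lt_last i).ne f hf
  rwa [P_cl] at h

include hW2 in
lemma hD_of : ∀ f ∈ W, Dop F n f ∈ W := by
  intro f hf
  have hS : (∑ i : Fin n,
      (P F n c i.castSucc i.castSucc - P F n c (Fin.last n) (Fin.last n)) f) ∈ W :=
    Submodule.sum_mem _ (fun i _ => hW2 i.castSucc (Fin.last n) f hf)
  have hval : (∑ i : Fin n,
      (P F n c i.castSucc i.castSucc - P F n c (Fin.last n) (Fin.last n)) f)
      = ((n : F) + 1) • Dop F n f + ((n : F) * c) • f := by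
    simp only [LinearMap.sub_apply, P_cc, P_ll, LinearMap.neg_apply, LinearMap.add_apply,
      LinearMap.smul_apply, Module.End.one_apply, sub_neg_eq_add]
    rw [Finset.sum_add_distrib, Finset.sum_const, Finset.card_univ, Fintype.card_fin]
    rw [show (∑ i : Fin n, (mulX F n i * pd F n i) f) = Dop F n f by
      rw [Dop, LinearMap.sum_apply]]
    rw [smul_add, ← Nat.cast_smul_eq_nsmul F n (Dop F n f), ← Nat.cast_smul_eq_nsmul F n (c • f),
      smul_smul, add_smul, one_smul]
    abel
  have hD : Dop F n f = ((n : F) + 1)⁻¹ • ((∑ i : Fin n,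
      (P F n c i.castSucc i.castSucc - P F n c (Fin.last n) (Fin.last n)) f)
        - ((n : F) * c) • f) := by
    rw [hval, add_sub_cancel_right, smul_smul, inv_mul_cancel₀, one_smul]
    have : ((n : F) + 1) = ((n + 1 : ℕ) : F) := by push_cast; ring
    rw [this]
    exact Nat.cast_ne_zero.mpr (Nat.succ_ne_zero n)
  rw [hD]
  exact W.smul_mem _ (W.sub_mem hS (W.smul_mem _ hf))

include hW2 in
lemma hN_of : ∀ i : Fin n, ∀ f ∈ W, (mulX F n i * pd F n i) f ∈ W := by
  intro i f hf
  have hq := hW2 i.castSucc (Fin.last n) f hf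
  rw [LinearMap.sub_apply, P_cc, P_ll] at hq
  have hD := hD_of hW2 f hf
  have : (mulX F n i * pd F n i) f
      = ((mulX F n i * pd F n i) f - (-(Dop F n + c • 1)) f) - Dop F n f - c • f := by
    simp only [LinearMap.neg_apply, LinearMap.add_apply, LinearMap.smul_apply,
      Module.End.one_apply, sub_neg_eq_add]
    abel
  rw [this]
  exact W.sub_mem (W.sub_mem hq hD) (W.smul_mem _ hf)

end Derive

section RTD

variable {c : F} {ℓ : ℕ}

lemma dg_zero : dg (0 : Fin n →₀ ℕ) = 0 := by simp [dg]

lemma dg_tsub_le (α : Fin n →₀ ℕ) (j : Fin n) : dg (α - Finsupp.single j 1) ≤ dg α := by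
  refine Finset.sum_le_sum (fun s _ => ?_)
  rw [Finsupp.tsub_apply]
  omega

lemma tsub_single_add {α : Fin n →₀ ℕ} {i : Fin n} (h : 0 < α i) :
    α - Finsupp.single i 1 + Finsupp.single i 1 = α := by
  ext s
  rcases eq_or_ne s i with rfl | hs
  · simp [Nat.sub_add_cancel h]
  · simp [Finsupp.single_apply, Ne.symm hs]

lemma dg_tsub_single {α : Fin n →₀ ℕ} {j : Fin n} (h : 0 < α j) :
    dg (α - Finsupp.single j 1) + 1 = dg α := by
  conv_rhs => rw [← tsub_single_add h]
  rw [dg_add, dg_single]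

lemma op_rtd (T : Module.End F (MvPolynomial (Fin n) F))
    (h : ∀ (α : Fin n →₀ ℕ) (a : F), dg α ≤ ℓ →
      T (monomial α a) ∈ restrictTotalDegree (Fin n) F ℓ) :
    ∀ f ∈ restrictTotalDegree (Fin n) F ℓ, T f ∈ restrictTotalDegree (Fin n) F ℓ := by
  intro f hf
  rw [← f.support_sum_monomial_coeff, map_sum]
  exact Submodule.sum_mem _ (fun β hβ => h β _ ((mem_rtd_iff ℓ f).mp hf β hβ))

lemma P_rtd (hc : c = -(ℓ : F)) : ∀ i j : Fin (n + 1),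
    ∀ f ∈ restrictTotalDegree (Fin n) F ℓ, P F n c i j f ∈ restrictTotalDegree (Fin n) F ℓ := by
  intro i j
  rw [P]
  split_ifs with hi hj hj
  · -- move
    refine op_rtd _ (fun α a hα => ?_)
    rw [move_mon]
    rcases Nat.eq_zero_or_pos (α ⟨j, hj⟩) with h0 | h0
    · simp only [h0, Nat.cast_zero, zero_smul]
      exact Submodule.zero_mem _
    · refine Submodule.smul_mem _ _ (mon_mem_rtd ?_ a)
      rw [dg_add, dg_single, dg_tsub_single h0]  -- careful: dg(α-e)+1 = dg α
      omega
  · -- raise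
    refine op_rtd _ (fun α a hα => ?_)
    rw [raise_mon]
    rcases eq_or_lt_of_le hα with heq | hlt
    · have : ((dg α : F) + c) = 0 := by rw [hc, heq]; ring
      simp only [this, zero_smul]
      exact Submodule.zero_mem _
    · refine Submodule.smul_mem _ _ (mon_mem_rtd ?_ a)
      rw [dg_add, dg_single]
      omega
  · -- -pd
    refine op_rtd _ (fun α a hα => ?_)
    rw [LinearMap.neg_apply, pd_mon]
    exact Submodule.neg_mem _ (mon_mem_rtd (le_trans (dg_tsub_le α _) hα) _)
  · -- -(D + c)
    refine op_rtd _ (fun α a hα => ?_)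
    rw [LinearMap.neg_apply, LinearMap.add_apply, D_mon, LinearMap.smul_apply,
      Module.End.one_apply, ← add_smul]
    exact Submodule.neg_mem _ (Submodule.smul_mem _ _ (mon_mem_rtd hα a))

end RTD

end Aux

/-- (i) if `c` is not a nonpositive integer then the only subspaces of `A`
invariant under all `P_{i,j}` (`i ≠ j`) and `P_{i,i} - P_{j,j}` are `{0}` and `A`;
(ii) if `c = -ℓ` with `ℓ ∈ ℕ`, the subspace of polynomials of degree `≤ ℓ` is invariant
and the invariant subspaces are exactly `{0}`, `A_(ℓ)` and `A`. -/
theorem stmt_1 (F : Type*) [Field F] [CharZero F] (n : ℕ) (hn : 2 ≤ n) (c : F) :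
    ((∀ k : ℕ, c ≠ -(k : F)) →
      ∀ W : Submodule F (MvPolynomial (Fin n) F),
        (∀ i j : Fin (n + 1), i ≠ j → ∀ f ∈ W, P F n c i j f ∈ W) →
        (∀ i j : Fin (n + 1), ∀ f ∈ W, (P F n c i i - P F n c j j) f ∈ W) →
        W = ⊥ ∨ W = ⊤) ∧
    (∀ ℓ : ℕ, c = -(ℓ : F) →
      (∀ i j : Fin (n + 1), i ≠ j → ∀ f ∈ restrictTotalDegree (Fin n) F ℓ,
          P F n c i j f ∈ restrictTotalDegree (Fin n) F ℓ) ∧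
      (∀ i j : Fin (n + 1), ∀ f ∈ restrictTotalDegree (Fin n) F ℓ,
          (P F n c i i - P F n c j j) f ∈ restrictTotalDegree (Fin n) F ℓ) ∧
      (∀ W : Submodule F (MvPolynomial (Fin n) F),
        (∀ i j : Fin (n + 1), i ≠ j → ∀ f ∈ W, P F n c i j f ∈ W) →
        (∀ i j : Fin (n + 1), ∀ f ∈ W, (P F n c i i - P F n c j j) f ∈ W) →
        W = ⊥ ∨ W = restrictTotalDegree (Fin n) F ℓ ∨ W = ⊤)) := by
  have i0 : Fin n := ⟨0, by omega⟩
  constructor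
  · -- part (i)
    intro hc W hW1 hW2
    by_cases hbot : W = ⊥
    · exact Or.inl hbot
    · right
      obtain ⟨f, hfW, hf0⟩ := Submodule.ne_bot_iff W |>.mp hbot
      obtain ⟨α, hα⟩ : ∃ α, α ∈ f.support :=
        Finset.nonempty_iff_ne_empty.mpr
          (fun h => hf0 (MvPolynomial.support_eq_empty.mp h))
      have hmon := mon_mem_of_mem (hN_of hW2) f hfW α hα
      have h1 : monomial (0 : Fin n →₀ ℕ) (1 : F) ∈ W :=
        mem_le_deg (hmove_of hW1) (hpd_of hW1) i0 (by rw [dg_zero]; omega) hmon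
      apply w_eq_top
      intro β
      have h2 := raise_single (hraise_of hW1) i0 h1 (dg β)
        (fun e _ _ h0 => hc e (eq_neg_of_add_eq_zero_right h0))
      rw [zero_add] at h2
      exact shuffle (hmove_of hW1) _ β (by rw [dg_single]) h2
  · intro ℓ hcℓ
    refine ⟨fun i j _ => P_rtd hcℓ i j, ?_, ?_⟩
    · intro i j f hf
      rw [LinearMap.sub_apply]
      exact Submodule.sub_mem _ (P_rtd hcℓ i i f hf) (P_rtd hcℓ j j f hf)
    · intro W hW1 hW2
      by_cases hbot : W = ⊥
      · exact Or.inl hbot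
      · right
        obtain ⟨f, hfW, hf0⟩ := Submodule.ne_bot_iff W |>.mp hbot
        obtain ⟨α, hα⟩ : ∃ α, α ∈ f.support :=
          Finset.nonempty_iff_ne_empty.mpr
            (fun h => hf0 (MvPolynomial.support_eq_empty.mp h))
        have hmon := mon_mem_of_mem (hN_of hW2) f hfW α hα
        by_cases hbig : ∃ γ : Fin n →₀ ℕ, monomial γ (1 : F) ∈ W ∧ ℓ < dg γ
        · right
          apply w_eq_top
          intro β
          obtain ⟨α1, hα1W, hα1d⟩ := hbig
          rcases le_or_gt (dg β) (dg α1) with h | h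
          · exact mem_le_deg (hmove_of hW1) (hpd_of hW1) i0 h hα1W
          · have h2 := raise_single (hraise_of hW1) i0 hα1W (dg β - dg α1)
              (fun e he1 _ h0 => by
                rw [hcℓ] at h0
                have he : (e : F) = (ℓ : F) :=
                  sub_eq_zero.mp (by rw [sub_eq_add_neg]; exact h0)
                have := Nat.cast_injective he
                omega)
            exact shuffle (hmove_of hW1) _ β (by rw [dg_add, dg_single]; omega) h2
        · left
          push_neg at hbig
          apply le_antisymm
          · intro g hg
            rw [mem_rtd_iff]
            intro γ hγ
            exact hbig γ (mon_mem_of_mem (hN_of hW2) g hg γ hγ)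
          · apply rtd_le
            intro β hβ
            have h1 : monomial (0 : Fin n →₀ ℕ) (1 : F) ∈ W :=
              mem_le_deg (hmove_of hW1) (hpd_of hW1) i0 (by rw [dg_zero]; omega) hmon
            have h2 := raise_single (hraise_of hW1) i0 h1 (dg β)
              (fun e he1 he2 h0 => by
                rw [hcℓ] at h0
                have he : (e : F) = (ℓ : F) :=
                  sub_eq_zero.mp (by rw [sub_eq_add_neg]; exact h0)
                have := Nat.cast_injective he
                rw [dg_zero] at he2
                omega)
            rw [zero_add] at h2
            exact shuffle (hmove_of hW1) _ β (by rw [dg_single]) h2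
end

section
/- If c ∈ F is not of the form −k·1_F for any nonnegative integer k, then the only F-linear subspaces of A invariant under all operators in the family Π_c are {0} and A. -/
open MvPolynomial

/-- The index set of the variables `x_0,x_1,…,x_m,y_1,…,y_m`:
`Sum.inl i` is `x_i` (`i = 0,…,m`) and `Sum.inr i` is `y_{i+1}` (`i = 0,…,m-1`). -/
abbrev SpIdx (m : ℕ) := Fin (m + 1) ⊕ Fin m

/-- Multiplication by `x_i` (`i = 0,…,m`). -/
noncomputable def mx (F : Type*) [Field F] (m : ℕ) (i : Fin (m + 1)) :
    Module.End F (MvPolynomial (SpIdx m) F) :=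
  LinearMap.mulLeft F (X (Sum.inl i))

/-- Multiplication by `y_{i+1}` (`i : Fin m`). -/
noncomputable def my (F : Type*) [Field F] (m : ℕ) (i : Fin m) :
    Module.End F (MvPolynomial (SpIdx m) F) :=
  LinearMap.mulLeft F (X (Sum.inr i))

/-- The partial derivative `∂_{x_i}`. -/
noncomputable def dx (F : Type*) [Field F] (m : ℕ) (i : Fin (m + 1)) :
    Module.End F (MvPolynomial (SpIdx m) F) :=
  (pderiv (Sum.inl i)).toLinearMap

/-- The partial derivative `∂_{y_{i+1}}`. -/
noncomputable def dy (F : Type*) [Field F] (m : ℕ) (i : Fin m) :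
    Module.End F (MvPolynomial (SpIdx m) F) :=
  (pderiv (Sum.inr i)).toLinearMap

/-- The Euler operator `D = Σ_{i=0}^m x_i ∂_{x_i} + Σ_{r=1}^m y_r ∂_{y_r}`. -/
noncomputable def Dsp (F : Type*) [Field F] (m : ℕ) :
    Module.End F (MvPolynomial (SpIdx m) F) :=
  ∑ i : Fin (m + 1), mx F m i * dx F m i + ∑ r : Fin m, my F m r * dy F m r

/-- The family `Π_c` of oscillator operators realizing the projective oscillator
representation `π_c` of `sp(2m+2,F)` on `A` (the paper's index `i ∈ {1,…,m}` is `i.succ`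
on the `x`-side and `i : Fin m` on the `y`-side). -/
noncomputable def PiFam (F : Type*) [Field F] (m : ℕ) (c : F) :
    Set (Module.End F (MvPolynomial (SpIdx m) F)) :=
  {T | (∃ i j : Fin m, T = mx F m i.succ * dx F m j.succ - my F m j * dy F m i) ∨
       (∃ i j : Fin m, T = mx F m i.succ * dy F m j + mx F m j.succ * dy F m i) ∨
       (∃ i j : Fin m, T = my F m i * dx F m j.succ + my F m j * dx F m i.succ) ∨
       T = -dx F m 0 ∨
       T = mx F m 0 * (Dsp F m + c • 1) ∨
       (∃ i : Fin m, T = mx F m 0 * dx F m i.succ - my F m i * (Dsp F m + c • 1)) ∨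
       (∃ i : Fin m, T = mx F m i.succ * dx F m 0 + dy F m i) ∨
       (∃ i : Fin m, T = my F m i * dx F m 0 - dx F m i.succ) ∨
       (∃ i : Fin m, T = mx F m 0 * dy F m i + mx F m i.succ * (Dsp F m + c • 1)) ∨
       T = Dsp F m + mx F m 0 * dx F m 0 + c • 1}

section Aux

open Finsupp

variable {σ : Type*} {R : Type*} [CommRing R]

theorem coeff_pderiv' (v : σ) (f : MvPolynomial σ R) (t : σ →₀ ℕ) :
    MvPolynomial.coeff t (pderiv v f)
      = ((t v + 1 : ℕ) : R) * MvPolynomial.coeff (t + Finsupp.single v 1) f := by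
  classical
  induction f using MvPolynomial.induction_on' with
  | add p q hp hq => simp [hp, hq, mul_add]
  | monomial s a =>
    rw [pderiv_monomial, coeff_monomial, coeff_monomial]
    by_cases h : s = t + Finsupp.single v 1
    · subst h
      have h1 : t + Finsupp.single v 1 - Finsupp.single v 1 = t := by
        ext u; simp [Finsupp.tsub_apply, Finsupp.add_apply]
      rw [if_pos h1, if_pos rfl]
      have h2 : (t + Finsupp.single v 1 : σ →₀ ℕ) v = t v + 1 := by
        simp [Finsupp.add_apply, Finsupp.single_apply]
      rw [h2]; push_cast; ring
    · rw [if_neg h]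
      by_cases h3 : s - Finsupp.single v 1 = t
      · have h4 : s v = 0 := by
          by_contra h5
          apply h
          ext u
          have h6 : (s - Finsupp.single v 1 : σ →₀ ℕ) u = t u := by rw [h3]
          rw [Finsupp.tsub_apply, Finsupp.single_apply] at h6
          rw [Finsupp.add_apply, Finsupp.single_apply]
          by_cases hu : v = u
          · subst hu; rw [if_pos rfl] at h6; rw [if_pos rfl]; omega
          · simp only [if_neg hu] at h6 ⊢; omega
        rw [if_pos h3, h4]
        simp
      · rw [if_neg h3]; simp

theorem pderiv_pderiv_comm' (u v : σ) (f : MvPolynomial σ R) :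
    pderiv u (pderiv v f) = pderiv v (pderiv u f) := by
  classical
  by_cases huv : u = v
  · subst huv; rfl
  · apply MvPolynomial.ext
    intro t
    rw [coeff_pderiv', coeff_pderiv', coeff_pderiv', coeff_pderiv']
    have hexp : t + Finsupp.single v 1 + Finsupp.single u 1
        = t + Finsupp.single u 1 + Finsupp.single v 1 := by rw [add_right_comm]
    rw [hexp]
    have h1 : (t + Finsupp.single v 1 : σ →₀ ℕ) u = t u := by
      simp [Finsupp.add_apply, Finsupp.single_apply, Ne.symm huv]
    have h2 : (t + Finsupp.single u 1 : σ →₀ ℕ) v = t v := by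
      simp [Finsupp.add_apply, Finsupp.single_apply, huv]
    rw [h1, h2]; ring

theorem mem_support_pderiv' {v : σ} {f : MvPolynomial σ R} {t : σ →₀ ℕ}
    (h : t ∈ (pderiv v f).support) : t + Finsupp.single v 1 ∈ f.support := by
  rw [MvPolynomial.mem_support_iff] at h ⊢
  intro h0
  apply h
  rw [coeff_pderiv', h0, mul_zero]

theorem totalDegree_pderiv_lt' {v : σ} {f : MvPolynomial σ R} (h : pderiv v f ≠ 0) :
    (pderiv v f).totalDegree < f.totalDegree := by
  have key : ∀ t ∈ (pderiv v f).support, (t.sum fun _ e => e) < f.totalDegree := by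
    intro t ht
    have h1 := MvPolynomial.le_totalDegree (mem_support_pderiv' ht)
    have h2 : ((t + Finsupp.single v 1).sum fun _ e => e)
        = (t.sum fun _ e => e) + ((Finsupp.single v 1).sum fun _ e => e) :=
      Finsupp.sum_add_index' (fun _ => rfl) (fun _ _ _ => rfl)
    rw [h2, Finsupp.sum_single_index rfl] at h1
    omega
  have hne : (pderiv v f).support.Nonempty := by
    rw [Finset.nonempty_iff_ne_empty]
    simpa [MvPolynomial.support_eq_empty] using h
  obtain ⟨t0, ht0⟩ := hne
  have hpos : 0 < f.totalDegree := lt_of_le_of_lt (Nat.zero_le _) (key t0 ht0)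
  have hrfl : (pderiv v f).totalDegree
      = (pderiv v f).support.sup (fun s => s.sum fun _ e => e) := rfl
  rw [hrfl]
  have hb : (⊥ : ℕ) < f.totalDegree := hpos
  exact (Finset.sup_lt_iff hb).mpr key

theorem degreeOf_pderiv_lt' {v : σ} {f : MvPolynomial σ R} (h : pderiv v f ≠ 0) :
    (pderiv v f).degreeOf v < f.degreeOf v := by
  have key : ∀ t ∈ (pderiv v f).support, t v < f.degreeOf v := by
    intro t ht
    have h1 : t + Finsupp.single v 1 ∈ f.support := mem_support_pderiv' ht
    have h2 : (t + Finsupp.single v 1 : σ →₀ ℕ) v ≤ f.degreeOf v := by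
      rw [MvPolynomial.degreeOf_eq_sup]
      exact Finset.le_sup (f := fun s : σ →₀ ℕ => s v) h1
    have h3 : (t + Finsupp.single v 1 : σ →₀ ℕ) v = t v + 1 := by
      simp [Finsupp.add_apply, Finsupp.single_apply]
    omega
  have hne : (pderiv v f).support.Nonempty := by
    rw [Finset.nonempty_iff_ne_empty]
    simpa [MvPolynomial.support_eq_empty] using h
  obtain ⟨t0, ht0⟩ := hne
  have hpos : 0 < f.degreeOf v := lt_of_le_of_lt (Nat.zero_le _) (key t0 ht0)
  rw [MvPolynomial.degreeOf_eq_sup]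
  exact (Finset.sup_lt_iff hpos).mpr key

theorem eq_C_of_pderiv_eq_zero' {F : Type*} [Field F] [CharZero F] {f : MvPolynomial σ F}
    (h : ∀ v : σ, pderiv v f = 0) : f = MvPolynomial.C (MvPolynomial.coeff 0 f) := by
  classical
  apply MvPolynomial.ext
  intro t
  by_cases ht : t = 0
  · subst ht; simp
  · obtain ⟨v, hv⟩ : ∃ v, t v ≠ 0 := by
      by_contra hall
      push_neg at hall
      exact ht (Finsupp.ext hall)
    have hts : (t - Finsupp.single v 1) + Finsupp.single v 1 = t := by
      ext u
      rw [Finsupp.add_apply, Finsupp.tsub_apply, Finsupp.single_apply]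
      by_cases hu : v = u
      · subst hu; rw [if_pos rfl]; omega
      · simp only [if_neg hu]; omega
    have hcp := coeff_pderiv' v f (t - Finsupp.single v 1)
    rw [h v, hts] at hcp
    simp only [MvPolynomial.coeff_zero] at hcp
    have hcast : ((((t - Finsupp.single v 1 : σ →₀ ℕ) v) + 1 : ℕ) : F) ≠ 0 := by
      exact Nat.cast_ne_zero.mpr (Nat.succ_ne_zero _)
    have hcoeff : MvPolynomial.coeff t f = 0 := by
      rcases mul_eq_zero.mp hcp.symm with h' | h'
      · exact absurd h' hcast
      · exact h'
    rw [hcoeff, MvPolynomial.coeff_C, if_neg (Ne.symm ht)]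

end Aux

section Main

open Finsupp

variable {F : Type*} [Field F] [CharZero F] {m : ℕ} {c : F}

private theorem pderiv_toLinearMap_apply {σ' : Type*} (v : σ') (p : MvPolynomial σ' F) :
    (pderiv v).toLinearMap p = pderiv v p := rfl

private theorem X_mul_monomial' (v : SpIdx m) (t : SpIdx m →₀ ℕ) (b : F) :
    (X v : MvPolynomial (SpIdx m) F) * monomial t b = monomial (Finsupp.single v 1 + t) b := by
  rw [monomial_single_add, pow_one]

private theorem X_mul_pderiv_monomial (v : SpIdx m) (s : SpIdx m →₀ ℕ) (a : F) :
    (X v : MvPolynomial (SpIdx m) F) * pderiv v (monomial s a) = (s v) • monomial s a := by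
  classical
  rw [pderiv_monomial]
  rcases Nat.eq_zero_or_pos (s v) with h | h
  · simp [h]
  · have hs : Finsupp.single v 1 + (s - Finsupp.single v 1) = s := by
      ext u
      rw [Finsupp.add_apply, Finsupp.tsub_apply, Finsupp.single_apply]
      by_cases hu : v = u
      · subst hu; rw [if_pos rfl]; omega
      · simp only [if_neg hu]; omega
    rw [X_mul_monomial', hs, smul_monomial]
    congr 1
    rw [nsmul_eq_mul]; ring


private theorem Dsp_monomial (s : SpIdx m →₀ ℕ) (a : F) :
    Dsp F m (monomial s a) = (∑ v : SpIdx m, s v) • monomial s a := by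
  simp only [Dsp, LinearMap.add_apply, LinearMap.sum_apply, Module.End.mul_apply,
    mx, my, dx, dy, LinearMap.mulLeft_apply, pderiv_toLinearMap_apply]
  simp only [_root_.X_mul_pderiv_monomial]
  rw [Fintype.sum_sum_type, ← Finset.sum_smul, ← Finset.sum_smul, ← add_smul]

private theorem DspC_monomial (c : F) (s : SpIdx m →₀ ℕ) (a : F) :
    (Dsp F m + c • (1 : Module.End F (MvPolynomial (SpIdx m) F))) (monomial s a)
      = (((∑ v : SpIdx m, s v : ℕ) : F) + c) • monomial s a := by
  rw [LinearMap.add_apply, Dsp_monomial, LinearMap.smul_apply, Module.End.one_apply, add_smul,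
    Nat.cast_smul_eq_nsmul]

private theorem sum_single_one (v : SpIdx m) :
    (∑ u : SpIdx m, (Finsupp.single v 1 : SpIdx m →₀ ℕ) u) = 1 := by
  classical
  simp [Finsupp.single_apply]

/-- Step 1, inner: from a nonzero element not involving `x_0`, get `1 ∈ W`. -/
private theorem step1b (W : Submodule F (MvPolynomial (SpIdx m) F))
    (hW : ∀ T ∈ PiFam F m c, ∀ f ∈ W, T f ∈ W) :
    ∀ n : ℕ, ∀ g : MvPolynomial (SpIdx m) F, g.totalDegree ≤ n → g ∈ W → g ≠ 0 →
      pderiv (Sum.inl (0 : Fin (m+1))) g = 0 → (1 : MvPolynomial (SpIdx m) F) ∈ W := by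
  have const_case : ∀ g : MvPolynomial (SpIdx m) F, g ∈ W → g ≠ 0 →
      (∀ v : SpIdx m, pderiv v g = 0) → (1 : MvPolynomial (SpIdx m) F) ∈ W := by
    intro g hgW hg hall
    have hC := eq_C_of_pderiv_eq_zero' hall
    have ha : MvPolynomial.coeff 0 g ≠ 0 := by
      intro h0
      apply hg
      rw [hC, h0, map_zero]
    have hmem := W.smul_mem (MvPolynomial.coeff 0 g)⁻¹ hgW
    have : (MvPolynomial.coeff 0 g)⁻¹ • g = 1 := by
      rw [smul_eq_C_mul]
      nth_rewrite 2 [hC]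
      rw [← MvPolynomial.C_mul, inv_mul_cancel₀ ha, MvPolynomial.C_1]
    rwa [this] at hmem
  intro n
  induction n with
  | zero =>
    intro g hdeg hgW hg _
    apply const_case g hgW hg
    intro v
    by_contra hv
    have := totalDegree_pderiv_lt' hv
    omega
  | succ n ih =>
    intro g hdeg hgW hg hg0
    by_cases hall : ∀ v : SpIdx m, pderiv v g = 0
    · exact const_case g hgW hg hall
    · push_neg at hall
      obtain ⟨v, hv⟩ := hall
      have hdeg' : (pderiv v g).totalDegree ≤ n := by
        have h1 := totalDegree_pderiv_lt' hv
        omega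
      have hg'0 : pderiv (Sum.inl (0 : Fin (m+1))) (pderiv v g) = 0 := by
        rw [pderiv_pderiv_comm', hg0, map_zero]
      have hg'W : pderiv v g ∈ W := by
        rcases v with i | i
        · have hi : i ≠ 0 := by
            rintro rfl
            exact hv hg0
          rcases Fin.eq_zero_or_eq_succ i with rfl | ⟨j, rfl⟩
          · exact absurd rfl hi
          · have hTmem : (my F m j * dx F m 0 - dx F m j.succ) ∈ PiFam F m c := by
                  exact Or.inr (Or.inr (Or.inr (Or.inr (Or.inr (Or.inr (Or.inr (Or.inl ⟨j, rfl⟩)))))))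
            have hT := hW _ hTmem g hgW
            have happ : (my F m j * dx F m 0 - dx F m j.succ) g = -(pderiv (Sum.inl j.succ) g) := by
              simp [my, dx, LinearMap.sub_apply, Module.End.mul_apply, LinearMap.mulLeft_apply,
                hg0]
            rw [happ] at hT
            simpa using W.neg_mem hT
        · have hTmem : (mx F m i.succ * dx F m 0 + dy F m i) ∈ PiFam F m c := by
              exact Or.inr (Or.inr (Or.inr (Or.inr (Or.inr (Or.inr (Or.inl ⟨i, rfl⟩))))))
          have hT := hW _ hTmem g hgW
          have happ : (mx F m i.succ * dx F m 0 + dy F m i) g = pderiv (Sum.inr i) g := by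
            simp [mx, dx, dy, LinearMap.add_apply, Module.End.mul_apply, LinearMap.mulLeft_apply,
              hg0]
          rwa [happ] at hT
      exact ih (pderiv v g) hdeg' hg'W hv hg'0

/-- Step 1: any nonzero element of `W` produces `1 ∈ W`. -/
private theorem step1 (W : Submodule F (MvPolynomial (SpIdx m) F))
    (hW : ∀ T ∈ PiFam F m c, ∀ f ∈ W, T f ∈ W)
    (f : MvPolynomial (SpIdx m) F) (hfW : f ∈ W) (hf : f ≠ 0) :
    (1 : MvPolynomial (SpIdx m) F) ∈ W := by
  have key : ∀ n : ℕ, ∀ g : MvPolynomial (SpIdx m) F,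
      g.degreeOf (Sum.inl (0 : Fin (m+1))) ≤ n → g ∈ W → g ≠ 0 →
      (1 : MvPolynomial (SpIdx m) F) ∈ W := by
    intro n
    induction n with
    | zero =>
      intro g hdeg hgW hg
      have h0 : pderiv (Sum.inl (0 : Fin (m+1))) g = 0 := by
        by_contra hv
        have := degreeOf_pderiv_lt' hv
        omega
      exact step1b W hW g.totalDegree g le_rfl hgW hg h0
    | succ n ih =>
      intro g hdeg hgW hg
      by_cases h0 : pderiv (Sum.inl (0 : Fin (m+1))) g = 0
      · exact step1b W hW g.totalDegree g le_rfl hgW hg h0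
      · have hTmem : (-dx F m 0) ∈ PiFam F m c := by
          exact Or.inr (Or.inr (Or.inr (Or.inl rfl)))
        have hT := hW _ hTmem g hgW
        have happ : (-dx F m 0) g = -(pderiv (Sum.inl (0 : Fin (m+1))) g) := by
          simp [dx]
        rw [happ] at hT
        have hg'W : pderiv (Sum.inl (0 : Fin (m+1))) g ∈ W := by simpa using W.neg_mem hT
        have hdeg' : (pderiv (Sum.inl (0 : Fin (m+1))) g).degreeOf (Sum.inl 0) ≤ n := by
          have := degreeOf_pderiv_lt' h0
          omega
        exact ih _ hdeg' hg'W h0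
  exact key (f.degreeOf (Sum.inl 0)) f le_rfl hfW hf

/-- Step 2: from `1 ∈ W`, every monomial is in `W`. -/
private theorem step2 (hc : ∀ k : ℕ, c ≠ -(k : F))
    (W : Submodule F (MvPolynomial (SpIdx m) F))
    (hW : ∀ T ∈ PiFam F m c, ∀ f ∈ W, T f ∈ W)
    (h1 : (1 : MvPolynomial (SpIdx m) F) ∈ W) :
    ∀ s : SpIdx m →₀ ℕ, (monomial s (1 : F)) ∈ W := by
  classical
  have key : ∀ n : ℕ, ∀ s : SpIdx m →₀ ℕ, (∑ v : SpIdx m, s v) ≤ n →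
      (monomial s (1 : F)) ∈ W := by
    intro n
    induction n with
    | zero =>
      intro s hs
      have h0 : s = 0 := by
        ext u
        have := Finset.sum_eq_zero_iff.mp (Nat.le_zero.mp hs) u (Finset.mem_univ u)
        simpa using this
      rw [h0]
      simpa [monomial_zero'] using h1
    | succ n ih =>
      intro s hs
      by_cases h0 : s = 0
      · rw [h0]; simpa [monomial_zero'] using h1
      obtain ⟨v, hv⟩ : ∃ v, s v ≠ 0 := by
        by_contra hall
        push_neg at hall
        exact h0 (Finsupp.ext hall)
      set t : SpIdx m →₀ ℕ := s - Finsupp.single v 1 with htdef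
      have hts : t + Finsupp.single v 1 = s := by
        ext u
        rw [Finsupp.add_apply, htdef, Finsupp.tsub_apply, Finsupp.single_apply]
        by_cases hu : v = u
        · subst hu; rw [if_pos rfl]; omega
        · simp only [if_neg hu]; omega
      have hdt : (∑ u : SpIdx m, t u) + 1 = ∑ u : SpIdx m, s u := by
        calc (∑ u : SpIdx m, t u) + 1
            = (∑ u : SpIdx m, t u) + (∑ u : SpIdx m, (Finsupp.single v 1 : SpIdx m →₀ ℕ) u) := by
              rw [sum_single_one]
          _ = ∑ u : SpIdx m, (t u + (Finsupp.single v 1 : SpIdx m →₀ ℕ) u) := by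
              rw [Finset.sum_add_distrib]
          _ = ∑ u : SpIdx m, s u := by
              apply Finset.sum_congr rfl
              intro u _
              rw [← hts, Finsupp.add_apply]
      have hdtn : (∑ u : SpIdx m, t u) ≤ n := by omega
      have htW : monomial t (1 : F) ∈ W := ih t hdtn
      set dF : F := ((∑ u : SpIdx m, t u : ℕ) : F) + c with hdFdef
      have hdF : dF ≠ 0 := by
        intro h
        exact hc (∑ u : SpIdx m, t u) (eq_neg_of_add_eq_zero_right h)
      -- membership of the auxiliary terms x_0 * ∂_u (monomial t 1)
      have hterm : ∀ u : SpIdx m,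
          (X (Sum.inl (0 : Fin (m+1))) : MvPolynomial (SpIdx m) F) * pderiv u (monomial t (1:F))
            ∈ W := by
        intro u
        rcases Nat.eq_zero_or_pos (t u) with h | h
        · rw [pderiv_monomial]
          simp [h]
        · rw [pderiv_monomial, X_mul_monomial', one_mul]
          set u' : SpIdx m →₀ ℕ :=
            Finsupp.single (Sum.inl (0 : Fin (m+1))) 1 + (t - Finsupp.single u 1) with hu'def
          have hptw : ∀ w, (t - Finsupp.single u 1 : SpIdx m →₀ ℕ) w + (Finsupp.single u 1 : SpIdx m →₀ ℕ) w
              = t w := by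
            intro w
            rw [Finsupp.tsub_apply, Finsupp.single_apply]
            by_cases hw : u = w
            · subst hw; rw [if_pos rfl]; omega
            · simp only [if_neg hw]; omega
          have hsum' : (∑ w : SpIdx m, u' w) ≤ n := by
            have e1 : (∑ w : SpIdx m, u' w)
                = (∑ w : SpIdx m, (Finsupp.single (Sum.inl (0 : Fin (m+1))) 1 :
                    SpIdx m →₀ ℕ) w) + ∑ w : SpIdx m, (t - Finsupp.single u 1 : SpIdx m →₀ ℕ) w := by
              rw [← Finset.sum_add_distrib]
              apply Finset.sum_congr rfl
              intro w _
              rw [hu'def, Finsupp.add_apply]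
            have e2 : (∑ w : SpIdx m, (t - Finsupp.single u 1 : SpIdx m →₀ ℕ) w)
                + (∑ w : SpIdx m, (Finsupp.single u 1 : SpIdx m →₀ ℕ) w)
                = ∑ w : SpIdx m, t w := by
              rw [← Finset.sum_add_distrib]
              exact Finset.sum_congr rfl fun w _ => hptw w
            rw [sum_single_one] at e2
            rw [e1, sum_single_one]
            omega
          have : (monomial u' ((t u : F)) : MvPolynomial (SpIdx m) F)
              = (t u : F) • monomial u' 1 := by
            rw [smul_monomial, smul_eq_mul, mul_one]
          rw [this]
          exact W.smul_mem _ (ih u' hsum')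
      -- now the case analysis on the variable v
      rcases v with i | i
      · rcases Fin.eq_zero_or_eq_succ i with rfl | ⟨j, rfl⟩
        · -- v = x_0 : use T = x_0 (D + c)
          have hTmem : (mx F m 0 * (Dsp F m + c • 1)) ∈ PiFam F m c := by
              exact Or.inr (Or.inr (Or.inr (Or.inr (Or.inl rfl))))
          have hT := hW _ hTmem _ htW
          have happ : (mx F m 0 * (Dsp F m + c • 1)) (monomial t (1:F))
              = dF • monomial s 1 := by
            rw [Module.End.mul_apply, DspC_monomial]
            simp only [mx, LinearMap.mulLeft_apply]
            rw [mul_smul_comm, X_mul_monomial']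
            rw [hdFdef]
            congr 2
            rw [← hts, add_comm]
          rw [happ] at hT
          have := W.smul_mem dF⁻¹ hT
          rwa [smul_smul, inv_mul_cancel₀ hdF, one_smul] at this
        · -- v = x_{j+1} : use T = x_0 ∂_{y_{j+1}} + x_{j+1}(D + c)
          have hTmem : (mx F m 0 * dy F m j + mx F m j.succ * (Dsp F m + c • 1))
              ∈ PiFam F m c := by
              exact Or.inr (Or.inr (Or.inr (Or.inr (Or.inr (Or.inr (Or.inr (Or.inr
              (Or.inl ⟨j, rfl⟩))))))))
          have hT := hW _ hTmem _ htW
          have happ : (mx F m 0 * dy F m j + mx F m j.succ * (Dsp F m + c • 1)) (monomial t (1:F))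
              = (X (Sum.inl (0 : Fin (m+1))) : MvPolynomial (SpIdx m) F)
                  * pderiv (Sum.inr j) (monomial t (1:F)) + dF • monomial s 1 := by
            rw [LinearMap.add_apply, Module.End.mul_apply, Module.End.mul_apply, DspC_monomial]
            simp only [mx, dy, LinearMap.mulLeft_apply, pderiv_toLinearMap_apply]
            congr 1
            rw [mul_smul_comm, X_mul_monomial']
            rw [hdFdef]
            congr 2
            rw [← hts, add_comm]
          rw [happ] at hT
          have hsub : dF • (monomial s 1 : MvPolynomial (SpIdx m) F) ∈ W := by
            have := W.sub_mem hT (hterm (Sum.inr j))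
            simpa using this
          have := W.smul_mem dF⁻¹ hsub
          rwa [smul_smul, inv_mul_cancel₀ hdF, one_smul] at this
      · -- v = y_{i+1} : use T = x_0 ∂_{x_{i+1}} - y_{i+1}(D + c)
        have hTmem : (mx F m 0 * dx F m i.succ - my F m i * (Dsp F m + c • 1))
            ∈ PiFam F m c := by
          exact Or.inr (Or.inr (Or.inr (Or.inr (Or.inr (Or.inl ⟨i, rfl⟩)))))
        have hT := hW _ hTmem _ htW
        have happ : (mx F m 0 * dx F m i.succ - my F m i * (Dsp F m + c • 1)) (monomial t (1:F))
            = (X (Sum.inl (0 : Fin (m+1))) : MvPolynomial (SpIdx m) F)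
                * pderiv (Sum.inl i.succ) (monomial t (1:F)) - dF • monomial s 1 := by
          rw [LinearMap.sub_apply, Module.End.mul_apply, Module.End.mul_apply, DspC_monomial]
          simp only [mx, my, dx, LinearMap.mulLeft_apply, pderiv_toLinearMap_apply]
          congr 1
          rw [mul_smul_comm, X_mul_monomial']
          rw [hdFdef]
          congr 2
          rw [← hts, add_comm]
        rw [happ] at hT
        have hsub : dF • (monomial s 1 : MvPolynomial (SpIdx m) F) ∈ W := by
          have := W.sub_mem (hterm (Sum.inl i.succ)) hT
          simpa using this
        have := W.smul_mem dF⁻¹ hsub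
        rwa [smul_smul, inv_mul_cancel₀ hdF, one_smul] at this
  intro s
  exact key (∑ v : SpIdx m, s v) s le_rfl

end Main


/-- if `c` is not a nonpositive integer, the only subspaces of `A` invariant
under every operator of the family `Π_c` are `{0}` and `A`. -/
theorem stmt_9 (F : Type*) [Field F] [CharZero F] (m : ℕ) (hm : 1 ≤ m) (c : F)
    (hc : ∀ k : ℕ, c ≠ -(k : F)) :
    ∀ W : Submodule F (MvPolynomial (SpIdx m) F),
      (∀ T ∈ PiFam F m c, ∀ f ∈ W, T f ∈ W) →
      W = ⊥ ∨ W = ⊤ := by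
  intro W hW
  by_cases hbot : W = ⊥
  · exact Or.inl hbot
  · right
    obtain ⟨f, hfW, hf⟩ := (Submodule.ne_bot_iff W).mp hbot
    have h1 : (1 : MvPolynomial (SpIdx m) F) ∈ W := step1 W hW f hfW hf
    have hmono := step2 hc W hW h1
    rw [eq_top_iff]
    intro p _
    rw [MvPolynomial.as_sum p]
    apply Submodule.sum_mem
    intro v _
    have hv : (monomial v (MvPolynomial.coeff v p) : MvPolynomial (SpIdx m) F)
        = (MvPolynomial.coeff v p) • monomial v 1 := by
      rw [smul_monomial, smul_eq_mul, mul_one]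
    rw [hv]
    exact W.smul_mem _ (hmono v)
end

section
/- Let ℓ be a nonnegative integer and c = −ℓ·1_F. Then the finite-dimensional subspace A_(ℓ) of polynomials of total degree at most ℓ has no invariant subspaces other than {0} and A_(ℓ): if M ⊆ A_(ℓ) is an F-linear subspace with T(M) ⊆ M for every operator T in the family Π_c, then M = {0} or M = A_(ℓ). -/
open MvPolynomial

section AuxLemmas

variable {σ : Type*} {F : Type*} [Field F] [CharZero F]

lemma aux_coeff_pderiv (j : σ) (f : MvPolynomial σ F) (t : σ →₀ ℕ) :
    coeff t (pderiv j f) = ((t j : F) + 1) * coeff (t + Finsupp.single j 1) f := by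
  classical
  induction f using MvPolynomial.induction_on' with
  | add p q hp hq => simp [hp, hq, mul_add]
  | monomial s a =>
    rw [pderiv_monomial, coeff_monomial, coeff_monomial]
    by_cases h : s = t + Finsupp.single j 1
    · subst h
      rw [if_pos (by simp), if_pos rfl]
      simp [Finsupp.add_apply, Finsupp.single_apply, mul_comm, mul_add]
    · rw [if_neg h, mul_zero]
      split
      · rename_i hst
        by_cases hsj : s j = 0
        · simp [hsj]
        · exfalso
          apply h
          rw [← hst, tsub_add_cancel_of_le]
          exact Finsupp.single_le_iff.mpr (Nat.one_le_iff_ne_zero.mpr hsj)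
      · rfl

lemma aux_degree_add_single (t : σ →₀ ℕ) (j : σ) :
    Finsupp.degree (t + Finsupp.single j 1) = Finsupp.degree t + 1 := by
  classical
  show ((t + Finsupp.single j 1).sum fun _ e => e) = (t.sum fun _ e => e) + 1
  rw [Finsupp.sum_add_index (by simp) (by intros; rfl)]
  simp [Finsupp.sum_single_index]

lemma aux_sum_add_single (t : σ →₀ ℕ) (j : σ) :
    ((t + Finsupp.single j 1).sum fun _ e => e) = (t.sum fun _ e => e) + 1 :=
  aux_degree_add_single t j

lemma aux_totalDegree_pderiv_lt (j : σ) (f : MvPolynomial σ F) (h : pderiv j f ≠ 0) :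
    (pderiv j f).totalDegree < f.totalDegree := by
  classical
  have hne : ∀ t : σ →₀ ℕ, coeff t (pderiv j f) ≠ 0 →
      coeff (t + Finsupp.single j 1) f ≠ 0 := by
    intro t ht h0
    rw [aux_coeff_pderiv, h0, mul_zero] at ht
    exact ht rfl
  have hpos : 0 < f.totalDegree := by
    obtain ⟨t, ht⟩ := MvPolynomial.ne_zero_iff.mp h
    have := MvPolynomial.le_totalDegree (MvPolynomial.mem_support_iff.mpr (hne t ht))
    have h3 := aux_sum_add_single t j
    omega
  rw [MvPolynomial.totalDegree]
  apply Finset.sup_lt_iff (by simpa using hpos) |>.mpr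
  intro t ht
  have := MvPolynomial.le_totalDegree
    (MvPolynomial.mem_support_iff.mpr (hne t (MvPolynomial.mem_support_iff.mp ht)))
  have h3 := aux_sum_add_single t j
  omega

lemma aux_eq_C_of_pderiv_eq_zero (f : MvPolynomial σ F) (h : ∀ j, pderiv j f = 0) :
    f = C (coeff 0 f) := by
  classical
  ext s
  rw [coeff_C]
  split
  · rename_i hs; subst hs; rfl
  · rename_i hs
    have hs' : s ≠ 0 := fun h0 => hs (by rw [h0])
    obtain ⟨j, hj⟩ : ∃ j, s j ≠ 0 := by
      by_contra hc
      push_neg at hc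
      exact hs' (Finsupp.ext fun a => hc a)
    set u : σ →₀ ℕ := s - Finsupp.single j 1 with hu
    have key := aux_coeff_pderiv j f u
    rw [h j, coeff_zero] at key
    have hcancel : u + Finsupp.single j 1 = s :=
      tsub_add_cancel_of_le (Finsupp.single_le_iff.mpr (Nat.one_le_iff_ne_zero.mpr hj))
    rw [hcancel] at key
    have hne : ((u j : ℕ) : F) + 1 ≠ 0 := Nat.cast_add_one_ne_zero (u j)
    rcases mul_eq_zero.mp key.symm with k | k
    · exact absurd k hne
    · exact k

lemma aux_euler_monomial [Fintype σ] (s : σ →₀ ℕ) (a : F) :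
    ∑ j : σ, X j * pderiv j (monomial s a) = (((Finsupp.degree s : ℕ) : F)) • monomial s a := by
  classical
  have h1 : ∀ j : σ, X j * pderiv j (monomial s a) = monomial s ((s j : F) * a) := by
    intro j
    rw [pderiv_monomial]
    by_cases h : s j = 0
    · simp [h]
    · rw [mul_comm a, ← pow_one (X j : MvPolynomial σ F), ← monomial_single_add,
        show Finsupp.single j 1 + (s - Finsupp.single j 1) = s from by
          rw [add_comm]
          exact tsub_add_cancel_of_le (Finsupp.single_le_iff.mpr (Nat.one_le_iff_ne_zero.mpr h))]
  simp only [h1]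
  rw [← map_sum (monomial s), ← Finset.sum_mul,
    show (∑ j : σ, (s j : F)) = ((Finsupp.degree s : ℕ) : F) from by
      rw [Finsupp.degree_apply, Nat.cast_sum]
      exact (Finset.sum_subset (Finset.subset_univ _)
        (by intro j _ hj; simp at hj; simp [hj])).symm,
    smul_monomial, smul_eq_mul]

lemma aux_euler [Fintype σ] {f : MvPolynomial σ F} {n : ℕ} (hf : f.IsHomogeneous n) :
    ∑ j : σ, X j * pderiv j f = (n : F) • f := by
  classical
  conv_lhs => rw [f.as_sum]
  simp only [map_sum, Finset.mul_sum]
  rw [Finset.sum_comm]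
  have h1 : ∀ s ∈ f.support, ∑ j : σ, X j * pderiv j (monomial s (coeff s f))
      = (n : F) • monomial s (coeff s f) := by
    intro s hs
    rw [aux_euler_monomial]
    congr 2
    by_contra hd
    exact (MvPolynomial.mem_support_iff.mp hs) (hf.coeff_eq_zero hd)
  rw [Finset.sum_congr rfl h1, ← Finset.smul_sum, ← f.as_sum]

lemma aux_pderiv_isHomogeneous {f : MvPolynomial σ F} {n : ℕ} (hf : f.IsHomogeneous n) (j : σ) :
    (pderiv j f).IsHomogeneous (n - 1) := by
  classical
  intro d hd
  rw [aux_coeff_pderiv] at hd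
  have h2 : coeff (d + Finsupp.single j 1) f ≠ 0 := by
    intro h0; rw [h0, mul_zero] at hd; exact hd rfl
  have h3 := hf h2
  rw [Pi.one_def, ← Finsupp.degree_eq_weight_one] at h3 ⊢
  have h4 := aux_degree_add_single d j
  omega

lemma aux_isHomogeneous_zero_eq_C {f : MvPolynomial σ F} (hf : f.IsHomogeneous 0) :
    f = C (coeff 0 f) := by
  classical
  ext s
  rw [coeff_C]
  split
  · rename_i hs; subst hs; rfl
  · rename_i hs
    have hs' : s ≠ 0 := fun h0 => hs (by rw [h0])
    apply hf.coeff_eq_zero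
    intro h0
    exact hs' ((Finsupp.degree_eq_zero_iff s).mp h0)

end AuxLemmas
open MvPolynomial

set_option maxHeartbeats 1000000 in
/-- for `c = -ℓ` with `ℓ ∈ ℕ`, the finite-dimensional subspace `A_(ℓ)` of
polynomials of total degree `≤ ℓ` has no invariant subspaces other than `{0}` and itself. -/
theorem stmt_11 (F : Type*) [Field F] [CharZero F] (m : ℕ) (hm : 1 ≤ m) (ℓ : ℕ) :
    FiniteDimensional F ↥(restrictTotalDegree (SpIdx m) F ℓ) ∧
    (∀ M : Submodule F (MvPolynomial (SpIdx m) F),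
      M ≤ restrictTotalDegree (SpIdx m) F ℓ →
      (∀ T ∈ PiFam F m (-(ℓ : F)), ∀ f ∈ M, T f ∈ M) →
      M = ⊥ ∨ M = restrictTotalDegree (SpIdx m) F ℓ) := by
  constructor
  · infer_instance
  intro M hMle hinv
  by_cases hbot : M = ⊥
  · exact Or.inl hbot
  right
  set c : F := -(ℓ : F) with hc
  -- unfolding of `Dsp + c • 1` on a homogeneous polynomial
  have hsimp : ∀ v : MvPolynomial (SpIdx m) F,
      (Dsp F m + c • 1) v = (∑ j : SpIdx m, X j * pderiv j v) + c • v := by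
    intro v
    simp [Dsp, mx, my, dx, dy, Module.End.mul_apply, LinearMap.mulLeft_apply,
      LinearMap.add_apply, LinearMap.smul_apply, Module.End.one_apply, LinearMap.sum_apply,
      Fintype.sum_sum_type]
  have hDv : ∀ {d : ℕ} (v : MvPolynomial (SpIdx m) F), v.IsHomogeneous d →
      (Dsp F m + c • 1) v = ((d : F) - (ℓ : F)) • v := by
    intro d v hv
    rw [hsimp v, aux_euler hv, hc, sub_eq_add_neg, add_smul]
  have hcast : ∀ d : ℕ, d < ℓ → ((d : F) - (ℓ : F)) ≠ 0 := by
    intro d hd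
    exact sub_ne_zero.mpr (by exact_mod_cast Nat.ne_of_lt hd)
  -- the operator `x_0 (D + c)`
  have happ5 : ∀ {d : ℕ} {v : MvPolynomial (SpIdx m) F}, v.IsHomogeneous d → v ∈ M →
      d < ℓ → X (Sum.inl 0) * v ∈ M := by
    intro d v hv hvM hd
    have hmem := hinv (mx F m 0 * (Dsp F m + c • 1))
      (Or.inr (Or.inr (Or.inr (Or.inr (Or.inl rfl))))) v hvM
    have heq : (mx F m 0 * (Dsp F m + c • 1)) v = ((d : F) - (ℓ : F)) • (X (Sum.inl 0) * v) := by
      rw [show (mx F m 0 * (Dsp F m + c • 1)) v = X (Sum.inl 0) * ((Dsp F m + c • 1) v) from by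
          simp [mx, Module.End.mul_apply, LinearMap.mulLeft_apply],
        hDv v hv, mul_smul_comm]
    rw [heq] at hmem
    have h2 := M.smul_mem ((d : F) - (ℓ : F))⁻¹ hmem
    rwa [inv_smul_smul₀ (hcast d hd)] at h2
  -- the operator `x_0 ∂_{y_i} + x_i (D + c)` : gives `x_i • v`
  have happ9 : ∀ (i : Fin m) {d : ℕ} {v : MvPolynomial (SpIdx m) F}, v.IsHomogeneous d →
      v ∈ M → d < ℓ → X (Sum.inl 0) * pderiv (Sum.inr i) v ∈ M →
      X (Sum.inl i.succ) * v ∈ M := by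
    intro i d v hv hvM hd hx0
    have hmem := hinv (mx F m 0 * dy F m i + mx F m i.succ * (Dsp F m + c • 1))
      (Or.inr (Or.inr (Or.inr (Or.inr (Or.inr (Or.inr (Or.inr (Or.inr (Or.inl ⟨i, rfl⟩)))))))))
      v hvM
    have heq : (mx F m 0 * dy F m i + mx F m i.succ * (Dsp F m + c • 1)) v
        = X (Sum.inl 0) * pderiv (Sum.inr i) v
          + ((d : F) - (ℓ : F)) • (X (Sum.inl i.succ) * v) := by
      rw [show (mx F m 0 * dy F m i + mx F m i.succ * (Dsp F m + c • 1)) v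
          = X (Sum.inl 0) * pderiv (Sum.inr i) v + X (Sum.inl i.succ) * ((Dsp F m + c • 1) v)
          from by
          simp [mx, dy, Module.End.mul_apply, LinearMap.mulLeft_apply, LinearMap.add_apply],
        hDv v hv, mul_smul_comm]
    rw [heq] at hmem
    have h2 := M.smul_mem ((d : F) - (ℓ : F))⁻¹ ((Submodule.add_mem_iff_right M hx0).mp hmem)
    rwa [inv_smul_smul₀ (hcast d hd)] at h2
  -- the operator `x_0 ∂_{x_i} - y_i (D + c)` : gives `y_i • v`
  have happ6 : ∀ (i : Fin m) {d : ℕ} {v : MvPolynomial (SpIdx m) F}, v.IsHomogeneous d →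
      v ∈ M → d < ℓ → X (Sum.inl 0) * pderiv (Sum.inl i.succ) v ∈ M →
      X (Sum.inr i) * v ∈ M := by
    intro i d v hv hvM hd hx0
    have hmem := hinv (mx F m 0 * dx F m i.succ - my F m i * (Dsp F m + c • 1))
      (Or.inr (Or.inr (Or.inr (Or.inr (Or.inr (Or.inl ⟨i, rfl⟩)))))) v hvM
    have heq : (mx F m 0 * dx F m i.succ - my F m i * (Dsp F m + c • 1)) v
        = X (Sum.inl 0) * pderiv (Sum.inl i.succ) v
          - ((d : F) - (ℓ : F)) • (X (Sum.inr i) * v) := by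
      rw [show (mx F m 0 * dx F m i.succ - my F m i * (Dsp F m + c • 1)) v
          = X (Sum.inl 0) * pderiv (Sum.inl i.succ) v - X (Sum.inr i) * ((Dsp F m + c • 1) v)
          from by
          simp [mx, dx, my, Module.End.mul_apply, LinearMap.mulLeft_apply, LinearMap.sub_apply],
        hDv v hv, mul_smul_comm]
    rw [heq] at hmem
    have h3 : ((d : F) - (ℓ : F)) • (X (Sum.inr i) * v) ∈ M := by
      have := M.sub_mem hx0 hmem
      rwa [sub_sub_cancel] at this
    have h2 := M.smul_mem ((d : F) - (ℓ : F))⁻¹ h3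
    rwa [inv_smul_smul₀ (hcast d hd)] at h2
  -- Step A: M contains 1
  have hCmem : ∀ f ∈ M, f ≠ (0 : MvPolynomial (SpIdx m) F) → f = C (coeff 0 f) →
      (1 : MvPolynomial (SpIdx m) F) ∈ M := by
    intro f hfM hf0 hC
    set a : F := coeff 0 f with ha
    have hane : a ≠ 0 := by
      intro h
      rw [h, map_zero] at hC
      exact hf0 hC
    have h2 := M.smul_mem a⁻¹ hfM
    rwa [show a⁻¹ • f = 1 from by
      rw [hC, smul_eq_C_mul, ← map_mul, inv_mul_cancel₀ hane, map_one]] at h2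
  have key1 : ∀ n : ℕ, ∀ f, f ∈ M → f ≠ (0 : MvPolynomial (SpIdx m) F) → f.totalDegree ≤ n →
      (1 : MvPolynomial (SpIdx m) F) ∈ M := by
    intro n
    induction n with
    | zero =>
      intro f hfM hf0 hdeg
      exact hCmem f hfM hf0
        (aux_isHomogeneous_zero_eq_C (isHomogeneous_of_totalDegree_zero _ (Nat.le_zero.mp hdeg)))
    | succ n ih =>
      intro f hfM hf0 hdeg
      by_cases h0 : pderiv (Sum.inl 0) f = 0
      · by_cases hx : ∃ i : Fin m, pderiv (Sum.inl i.succ) f ≠ 0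
        · obtain ⟨i, hi⟩ := hx
          have hmem := hinv (my F m i * dx F m 0 - dx F m i.succ)
            (Or.inr (Or.inr (Or.inr (Or.inr (Or.inr (Or.inr (Or.inr (Or.inl ⟨i, rfl⟩)))))))) f hfM
          rw [show (my F m i * dx F m 0 - dx F m i.succ) f
              = X (Sum.inr i) * pderiv (Sum.inl 0) f - pderiv (Sum.inl i.succ) f from by
              simp [my, dx, Module.End.mul_apply, LinearMap.mulLeft_apply, LinearMap.sub_apply],
            h0, mul_zero, zero_sub] at hmem
          have h2 := M.neg_mem hmem
          rw [neg_neg] at h2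
          have h3 := aux_totalDegree_pderiv_lt (Sum.inl i.succ) f hi
          exact ih _ h2 hi (by omega)
        · by_cases hy : ∃ i : Fin m, pderiv (Sum.inr i) f ≠ 0
          · obtain ⟨i, hi⟩ := hy
            have hmem := hinv (mx F m i.succ * dx F m 0 + dy F m i)
              (Or.inr (Or.inr (Or.inr (Or.inr (Or.inr (Or.inr (Or.inl ⟨i, rfl⟩))))))) f hfM
            rw [show (mx F m i.succ * dx F m 0 + dy F m i) f
                = X (Sum.inl i.succ) * pderiv (Sum.inl 0) f + pderiv (Sum.inr i) f from by
                simp [mx, dx, dy, Module.End.mul_apply, LinearMap.mulLeft_apply,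
                  LinearMap.add_apply],
              h0, mul_zero, zero_add] at hmem
            have h3 := aux_totalDegree_pderiv_lt (Sum.inr i) f hi
            exact ih _ hmem hi (by omega)
          · push_neg at hx hy
            have hall : ∀ j, pderiv j f = 0 := by
              rintro (jx | jy)
              · rcases Fin.eq_zero_or_eq_succ jx with rfl | ⟨i, rfl⟩
                · exact h0
                · exact hx i
              · exact hy jy
            exact hCmem f hfM hf0 (aux_eq_C_of_pderiv_eq_zero f hall)
      · have hmem := hinv (-dx F m 0) (Or.inr (Or.inr (Or.inr (Or.inl rfl)))) f hfM
        rw [show (-dx F m 0) f = -(pderiv (Sum.inl 0) f) from by simp [dx]] at hmem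
        have h2 := M.neg_mem hmem
        rw [neg_neg] at h2
        have h3 := aux_totalDegree_pderiv_lt (Sum.inl 0) f h0
        exact ih _ h2 h0 (by omega)
  obtain ⟨f, hfM, hf0⟩ := Submodule.ne_bot_iff M |>.mp hbot
  have hone : (1 : MvPolynomial (SpIdx m) F) ∈ M := key1 f.totalDegree f hfM hf0 le_rfl
  -- Step B: all homogeneous polynomials of degree ≤ ℓ are in M
  have keyP : ∀ d : ℕ, ∀ v : MvPolynomial (SpIdx m) F, v.IsHomogeneous d → d ≤ ℓ → v ∈ M := by
    intro d
    induction d using Nat.strong_induction_on with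
    | _ d ih =>
    intro v hv hdle
    match d, hv, hdle, ih with
    | 0, hv, hdle, ih =>
      rw [aux_isHomogeneous_zero_eq_C hv,
        show (C (coeff 0 v) : MvPolynomial (SpIdx m) F) = (coeff 0 v) • 1 from by
          rw [smul_eq_C_mul, mul_one]]
      exact M.smul_mem _ hone
    | (e+1), hv, hdle, ih =>
      have hkeyX : ∀ w : MvPolynomial (SpIdx m) F, w.IsHomogeneous e → ∀ j : SpIdx m,
          X j * w ∈ M := by
        intro w hw j
        have hwM : w ∈ M := ih e (by omega) w hw (by omega)
        have hder : ∀ j' : SpIdx m, X (Sum.inl 0) * pderiv j' w ∈ M := by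
          intro j'
          rcases eq_or_ne (pderiv j' w) 0 with hz | hz
          · rw [hz, mul_zero]; exact M.zero_mem
          · have hw' := aux_pderiv_isHomogeneous hw j'
            have hwM' : pderiv j' w ∈ M := ih (e - 1) (by omega) _ hw' (by omega)
            exact happ5 hw' hwM' (by omega)
        rcases j with jx | jy
        · rcases Fin.eq_zero_or_eq_succ jx with rfl | ⟨i, rfl⟩
          · exact happ5 hw hwM (by omega)
          · exact happ9 i hw hwM (by omega) (hder (Sum.inr i))
        · exact happ6 jy hw hwM (by omega) (hder (Sum.inl jy.succ))
      rw [v.as_sum]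
      apply Submodule.sum_mem
      intro s hs
      have hdeg : Finsupp.degree s = e + 1 := by
        by_contra hne
        exact (MvPolynomial.mem_support_iff.mp hs) (hv.coeff_eq_zero hne)
      have hs0 : s ≠ 0 := by
        intro h0
        rw [h0, map_zero] at hdeg
        omega
      obtain ⟨j, hj⟩ : ∃ j, s j ≠ 0 := by
        by_contra hcon
        push_neg at hcon
        exact hs0 (Finsupp.ext fun a => hcon a)
      set u : SpIdx m →₀ ℕ := s - Finsupp.single j 1 with hu
      have hcancel : u + Finsupp.single j 1 = s :=
        tsub_add_cancel_of_le (Finsupp.single_le_iff.mpr (Nat.one_le_iff_ne_zero.mpr hj))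
      have hudeg : Finsupp.degree u = e := by
        have h2 := aux_degree_add_single u j
        rw [hcancel, hdeg] at h2
        omega
      rw [show monomial s (coeff s v) = X j * monomial u (coeff s v) from by
        rw [← hcancel, add_comm, monomial_single_add, pow_one]]
      exact hkeyX _ (isHomogeneous_monomial _ hudeg) j
  -- conclusion
  refine le_antisymm hMle ?_
  intro g hg
  rw [mem_restrictTotalDegree] at hg
  rw [← g.sum_homogeneousComponent]
  apply Submodule.sum_mem
  intro i hi
  rw [Finset.mem_range] at hi
  exact keyP i _ (homogeneousComponent_isHomogeneous i g) (by omega)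
end

section
/- Let ℓ be a nonnegative integer and c = −ℓ·1_F. Then the F-linear subspaces of A invariant under every operator in the family Π_c are exactly {0}, A_(ℓ) and A. In particular the quotient module A/A_(ℓ) is irreducible, so A has a composition series of length 2 under the representation π_{−ℓ} of sp(2m+2,F). -/
open MvPolynomial

set_option linter.unusedSectionVars false
set_option linter.unusedVariables false
set_option linter.unusedTactic false
set_option maxHeartbeats 1000000

namespace S12

variable {F : Type*} [Field F] [CharZero F] {m : ℕ}

def x0 : SpIdx m := Sum.inl 0
def vx (i : Fin m) : SpIdx m := Sum.inl i.succ
def vy (i : Fin m) : SpIdx m := Sum.inr i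

lemma x0_ne_vx (i : Fin m) : (x0 : SpIdx m) ≠ vx i := by
  simp [x0, vx, (Fin.succ_ne_zero i).symm]

lemma x0_ne_vy (i : Fin m) : (x0 : SpIdx m) ≠ vy i := by simp [x0, vy]

lemma vx_ne_vy (i j : Fin m) : (vx i : SpIdx m) ≠ vy j := by simp [vx, vy]

lemma vx_inj {i j : Fin m} (h : (vx i : SpIdx m) = vx j) : i = j := by
  simpa [vx, Fin.succ_inj] using h

noncomputable def e (z : SpIdx m) : SpIdx m →₀ ℕ := Finsupp.single z 1

noncomputable def M (F : Type*) [Field F] {m : ℕ} (s : SpIdx m →₀ ℕ) :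
    MvPolynomial (SpIdx m) F := monomial s 1

def wt (s : SpIdx m →₀ ℕ) : ℕ := s.sum fun _ n => n

lemma wt_add (s t : SpIdx m →₀ ℕ) : wt (s + t) = wt s + wt t :=
  Finsupp.sum_add_index' (fun _ => rfl) (fun _ _ _ => rfl)

lemma wt_single (z : SpIdx m) (n : ℕ) : wt (Finsupp.single z n) = n :=
  Finsupp.sum_single_index rfl

lemma wt_e (z : SpIdx m) : wt (e z) = 1 := wt_single z 1

lemma wt_eq_sum (s : SpIdx m →₀ ℕ) : wt s = ∑ z : SpIdx m, s z :=
  Finsupp.sum_fintype _ _ (fun _ => rfl)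

lemma le_wt (s : SpIdx m →₀ ℕ) (z : SpIdx m) : s z ≤ wt s := by
  rw [wt_eq_sum]
  exact Finset.single_le_sum (f := fun z => s z) (fun _ _ => Nat.zero_le _) (Finset.mem_univ z)

lemma wt_eq_zero {s : SpIdx m →₀ ℕ} (h : wt s = 0) : s = 0 := by
  ext z
  have h2 := le_wt s z
  rw [h] at h2
  simpa using h2

lemma sub_e_add_e {s : SpIdx m →₀ ℕ} {z : SpIdx m} (h : 1 ≤ s z) : s - e z + e z = s :=
  tsub_add_cancel_of_le (Finsupp.single_le_iff.mpr h)

lemma wt_sub_e {s : SpIdx m →₀ ℕ} {z : SpIdx m} (h : 1 ≤ s z) : wt (s - e z) + 1 = wt s := by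
  conv_rhs => rw [← sub_e_add_e h]
  rw [wt_add, wt_e]

lemma M_ne_zero (s : SpIdx m →₀ ℕ) : M F s ≠ 0 := by
  simp [M, monomial_eq_zero]

lemma smul_M (c : F) (s : SpIdx m →₀ ℕ) : c • M F s = monomial s c := by
  rw [M, smul_monomial, smul_eq_mul, mul_one]

lemma X_mul_M (z : SpIdx m) (s : SpIdx m →₀ ℕ) : X z * M F s = M F (s + e z) := by
  rw [M, M, X, monomial_mul, one_mul, add_comm]; rfl

lemma pderiv_M (z : SpIdx m) (s : SpIdx m →₀ ℕ) :
    pderiv z (M F s) = ((s z : ℕ) : F) • M F (s - e z) := by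
  rw [M, pderiv_monomial, one_mul, smul_M]; rfl

lemma ZDZ_self (z : SpIdx m) (s : SpIdx m →₀ ℕ) :
    X z * pderiv z (M F s) = ((s z : ℕ) : F) • M F s := by
  rw [pderiv_M, mul_smul_comm, X_mul_M]
  rcases Nat.eq_zero_or_pos (s z) with h | h
  · simp [h]
  · rw [sub_e_add_e h]

lemma Dsp_M (s : SpIdx m →₀ ℕ) : Dsp F m (M F s) = ((wt s : ℕ) : F) • M F s := by
  rw [Dsp]
  simp only [LinearMap.add_apply, LinearMap.coe_sum, Finset.sum_apply, Module.End.mul_apply,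
    mx, my, dx, dy, LinearMap.mulLeft_apply, Derivation.coeFn_coe]
  simp only [ZDZ_self]
  rw [← Finset.sum_smul, ← Finset.sum_smul, ← add_smul]
  congr 1
  rw [wt_eq_sum, Fintype.sum_sum_type]
  push_cast
  rfl

lemma DspC_M (c : F) (s : SpIdx m →₀ ℕ) :
    (Dsp F m + c • (1 : Module.End F (MvPolynomial (SpIdx m) F))) (M F s)
      = (((wt s : ℕ) : F) + c) • M F s := by
  simp [Dsp_M, add_smul, LinearMap.add_apply]

lemma M_mem_rtd {s : SpIdx m →₀ ℕ} {k : ℕ} (h : wt s ≤ k) :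
    M F s ∈ restrictTotalDegree (SpIdx m) F k := by
  rw [mem_restrictTotalDegree]
  exact le_trans (totalDegree_monomial_le _ _) h


lemma coeff_pderiv (z : SpIdx m) (f : MvPolynomial (SpIdx m) F) (t : SpIdx m →₀ ℕ) :
    coeff t (pderiv z f) = ((t z + 1 : ℕ) : F) * coeff (t + e z) f := by
  induction f using MvPolynomial.induction_on' with
  | monomial u a =>
    rw [pderiv_monomial, coeff_monomial, coeff_monomial]
    by_cases h : u = t + e z
    · subst h
      rw [if_pos, if_pos rfl]
      · have h3 : (t + e z) z = t z + 1 := by simp [e]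
        rw [h3]; push_cast; ring
      · show t + e z - e z = t
        rw [add_tsub_cancel_right]
    · rw [if_neg h]
      by_cases h2 : u - e z = t
      · have hz : u z = 0 := by
          by_contra hzz
          exact h (by rw [← h2, sub_e_add_e (Nat.one_le_iff_ne_zero.mpr hzz)])
        simp only [e] at h2
        rw [if_pos h2]
        simp [hz]
      · simp only [e] at h2
        rw [if_neg h2, mul_zero]
  | add p q hp hq => simp only [map_add, coeff_add, hp, hq, mul_add]

lemma supp_pderiv {z : SpIdx m} {f : MvPolynomial (SpIdx m) F} {t : SpIdx m →₀ ℕ}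
    (h : t ∈ (pderiv z f).support) : t + e z ∈ f.support := by
  rw [mem_support_iff] at h ⊢
  intro h2
  rw [coeff_pderiv, h2, mul_zero] at h
  exact h rfl

lemma coeff_X_mul_e (z : SpIdx m) (f : MvPolynomial (SpIdx m) F) (t : SpIdx m →₀ ℕ) :
    coeff t (X z * f) = if 1 ≤ t z then coeff (t - e z) f else 0 := by
  classical
  rw [coeff_X_mul']
  congr 1
  simp [Finsupp.mem_support_iff, Nat.one_le_iff_ne_zero, e]

lemma coeff_XD (z z' : SpIdx m) (f : MvPolynomial (SpIdx m) F) (t : SpIdx m →₀ ℕ) :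
    coeff t (X z * pderiv z' f)
      = if 1 ≤ t z then (((t - e z) z' + 1 : ℕ) : F) * coeff (t - e z + e z') f else 0 := by
  rw [coeff_X_mul_e]
  split
  · rw [coeff_pderiv]
  · rfl

lemma td_eq_sup (f : MvPolynomial (SpIdx m) F) : f.totalDegree = f.support.sup wt := rfl

lemma exists_wt_eq_td {f : MvPolynomial (SpIdx m) F} (hf : f ≠ 0) :
    ∃ s ∈ f.support, wt s = f.totalDegree := by
  obtain ⟨s, hs, h⟩ := Finset.exists_mem_eq_sup f.support
    (MvPolynomial.support_nonempty.mpr hf) wt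
  exact ⟨s, hs, h.symm⟩

lemma wt_le_td {f : MvPolynomial (SpIdx m) F} {s : SpIdx m →₀ ℕ} (h : s ∈ f.support) :
    wt s ≤ f.totalDegree := le_totalDegree h

lemma coeff_eq_zero_of_td_lt {f : MvPolynomial (SpIdx m) F} {s : SpIdx m →₀ ℕ}
    (h : f.totalDegree < wt s) : coeff s f = 0 := by
  by_contra hc
  exact absurd (wt_le_td (mem_support_iff.mpr hc)) (not_le.mpr h)

section Rules

variable {ℓ : ℕ} {W : Submodule F (MvPolynomial (SpIdx m) F)}

lemma mem_of_smul_mem {c : F} (hc : c ≠ 0) {v : MvPolynomial (SpIdx m) F}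
    (h : c • v ∈ W) : v ∈ W := by
  have h2 := W.smul_mem c⁻¹ h
  rwa [smul_smul, inv_mul_cancel₀ hc, one_smul] at h2

lemma extract_add {u v : MvPolynomial (SpIdx m) F} (h : u + v ∈ W) (hv : v ∈ W) : u ∈ W := by
  have := W.sub_mem h hv; simpa using this

lemma extract_add' {u v : MvPolynomial (SpIdx m) F} (h : u + v ∈ W) (hu : u ∈ W) : v ∈ W := by
  have := W.sub_mem h hu; simpa using this

lemma extract_sub' {u v : MvPolynomial (SpIdx m) F} (h : u - v ∈ W) (hu : u ∈ W) : v ∈ W := by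
  have := W.sub_mem hu h; simpa using this

lemma extract_sub {u v : MvPolynomial (SpIdx m) F} (h : u - v ∈ W) (hv : v ∈ W) : u ∈ W := by
  have := W.add_mem h hv; simpa using this

variable (hW : ∀ T ∈ PiFam F m (-(ℓ : F)), ∀ f ∈ W, T f ∈ W)
include hW

lemma R1 {f : MvPolynomial (SpIdx m) F} (hf : f ∈ W) : pderiv (x0 : SpIdx m) f ∈ W := by
  have hT : (-dx F m 0) ∈ PiFam F m (-(ℓ : F)) := by
    exact Or.inr (Or.inr (Or.inr (Or.inl rfl)))
  have h2 := W.neg_mem (hW _ hT f hf)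
  simpa [dx, x0] using h2

lemma R2 (i : Fin m) {f : MvPolynomial (SpIdx m) F} (hf : f ∈ W) :
    X (vx i) * pderiv (x0 : SpIdx m) f + pderiv (vy i) f ∈ W := by
  have hT : (mx F m i.succ * dx F m 0 + dy F m i) ∈ PiFam F m (-(ℓ : F)) := by
    exact Or.inr (Or.inr (Or.inr (Or.inr (Or.inr (Or.inr (Or.inl ⟨i, rfl⟩))))))
  have h2 := hW _ hT f hf
  simpa [mx, dx, dy, x0, vx, vy, Module.End.mul_apply, LinearMap.add_apply,
    LinearMap.mulLeft_apply] using h2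

lemma R3 (i : Fin m) {f : MvPolynomial (SpIdx m) F} (hf : f ∈ W) :
    X (vy i) * pderiv (x0 : SpIdx m) f - pderiv (vx i) f ∈ W := by
  have hT : (my F m i * dx F m 0 - dx F m i.succ) ∈ PiFam F m (-(ℓ : F)) := by
    exact Or.inr (Or.inr (Or.inr (Or.inr (Or.inr (Or.inr (Or.inr (Or.inl ⟨i, rfl⟩)))))))
  have h2 := hW _ hT f hf
  simpa [my, dx, x0, vx, vy, Module.End.mul_apply, LinearMap.sub_apply,
    LinearMap.mulLeft_apply] using h2

lemma R4 {f : MvPolynomial (SpIdx m) F} (hf : f ∈ W) :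
    X (x0 : SpIdx m) * ((Dsp F m + (-(ℓ : F)) • 1) f) ∈ W := by
  have hT : (mx F m 0 * (Dsp F m + (-(ℓ : F)) • 1)) ∈ PiFam F m (-(ℓ : F)) := by
    exact Or.inr (Or.inr (Or.inr (Or.inr (Or.inl rfl))))
  have h2 := hW _ hT f hf
  simpa [mx, x0, Module.End.mul_apply, LinearMap.mulLeft_apply] using h2

lemma R5 (i : Fin m) {f : MvPolynomial (SpIdx m) F} (hf : f ∈ W) :
    X (x0 : SpIdx m) * pderiv (vx i) f - X (vy i) * ((Dsp F m + (-(ℓ : F)) • 1) f) ∈ W := by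
  have hT : (mx F m 0 * dx F m i.succ - my F m i * (Dsp F m + (-(ℓ : F)) • 1))
      ∈ PiFam F m (-(ℓ : F)) := by
    exact Or.inr (Or.inr (Or.inr (Or.inr (Or.inr (Or.inl ⟨i, rfl⟩)))))
  have h2 := hW _ hT f hf
  simpa [mx, my, dx, x0, vx, vy, Module.End.mul_apply, LinearMap.sub_apply,
    LinearMap.mulLeft_apply] using h2

lemma R6 (i : Fin m) {f : MvPolynomial (SpIdx m) F} (hf : f ∈ W) :
    X (x0 : SpIdx m) * pderiv (vy i) f + X (vx i) * ((Dsp F m + (-(ℓ : F)) • 1) f) ∈ W := by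
  have hT : (mx F m 0 * dy F m i + mx F m i.succ * (Dsp F m + (-(ℓ : F)) • 1))
      ∈ PiFam F m (-(ℓ : F)) := by
    exact Or.inr (Or.inr (Or.inr (Or.inr (Or.inr (Or.inr (Or.inr (Or.inr (Or.inl ⟨i, rfl⟩))))))))
  have h2 := hW _ hT f hf
  simpa [mx, dy, x0, vx, vy, Module.End.mul_apply, LinearMap.add_apply,
    LinearMap.mulLeft_apply] using h2

lemma R7 (i j : Fin m) {f : MvPolynomial (SpIdx m) F} (hf : f ∈ W) :
    X (vx i) * pderiv (vx j) f - X (vy j) * pderiv (vy i) f ∈ W := by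
  have hT : (mx F m i.succ * dx F m j.succ - my F m j * dy F m i) ∈ PiFam F m (-(ℓ : F)) := by
    exact Or.inl ⟨i, j, rfl⟩
  have h2 := hW _ hT f hf
  simpa [mx, my, dx, dy, vx, vy, Module.End.mul_apply, LinearMap.sub_apply,
    LinearMap.mulLeft_apply] using h2

lemma R8 (i j : Fin m) {f : MvPolynomial (SpIdx m) F} (hf : f ∈ W) :
    X (vx i) * pderiv (vy j) f + X (vx j) * pderiv (vy i) f ∈ W := by
  have hT : (mx F m i.succ * dy F m j + mx F m j.succ * dy F m i) ∈ PiFam F m (-(ℓ : F)) := by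
    exact Or.inr (Or.inl ⟨i, j, rfl⟩)
  have h2 := hW _ hT f hf
  simpa [mx, dy, vx, vy, Module.End.mul_apply, LinearMap.add_apply,
    LinearMap.mulLeft_apply] using h2

lemma R9 (i j : Fin m) {f : MvPolynomial (SpIdx m) F} (hf : f ∈ W) :
    X (vy i) * pderiv (vx j) f + X (vy j) * pderiv (vx i) f ∈ W := by
  have hT : (my F m i * dx F m j.succ + my F m j * dx F m i.succ) ∈ PiFam F m (-(ℓ : F)) := by
    exact Or.inr (Or.inr (Or.inl ⟨i, j, rfl⟩))
  have h2 := hW _ hT f hf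
  simpa [my, dx, vx, vy, Module.End.mul_apply, LinearMap.add_apply,
    LinearMap.mulLeft_apply] using h2

end Rules


lemma M_zero : M F (0 : SpIdx m →₀ ℕ) = 1 := by
  rw [M, monomial_zero', C_1]

lemma pderiv_td_lt {f : MvPolynomial (SpIdx m) F} {z : SpIdx m} (h : pderiv z f ≠ 0) :
    (pderiv z f).totalDegree < f.totalDegree := by
  have hbound : ∀ t ∈ (pderiv z f).support, wt t + 1 ≤ f.totalDegree := by
    intro t ht
    have h2 := wt_le_td (supp_pderiv ht)
    rwa [wt_add, wt_e] at h2
  have hpos : 0 < f.totalDegree := by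
    obtain ⟨t, ht⟩ := MvPolynomial.support_nonempty.mpr h
    have := hbound t ht
    omega
  rw [td_eq_sup]
  rw [Finset.sup_lt_iff (by simpa using hpos)]
  intro t ht
  have := hbound t ht
  omega

lemma td_zero_of_pderiv_zero {f : MvPolynomial (SpIdx m) F}
    (h : ∀ z : SpIdx m, pderiv z f = 0) : f.totalDegree = 0 := by
  by_contra hd
  have hf : f ≠ 0 := by intro h0; rw [h0] at hd; simp at hd
  obtain ⟨s, hs, hwt⟩ := exists_wt_eq_td hf
  have hs0 : s ≠ 0 := by
    intro h0
    rw [h0] at hwt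
    exact hd (by simpa [wt] using hwt.symm)
  obtain ⟨z, hz⟩ := Finsupp.support_nonempty_iff.mpr hs0
  rw [Finsupp.mem_support_iff] at hz
  have harg : (s - e z) z + 1 = s z := by
    have h5 : (s - e z) z = s z - 1 := by rw [Finsupp.tsub_apply]; simp [e]
    omega
  have hc : coeff (s - e z) (pderiv z f) = ((s z : ℕ) : F) * coeff s f := by
    rw [coeff_pderiv, sub_e_add_e (Nat.one_le_iff_ne_zero.mpr hz), harg]
  rw [h z] at hc
  simp only [coeff_zero] at hc
  have : coeff s f ≠ 0 := mem_support_iff.mp hs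
  have hzF : ((s z : ℕ) : F) ≠ 0 := Nat.cast_ne_zero.mpr hz
  exact this (by
    rcases mul_eq_zero.mp hc.symm with h' | h'
    · exact absurd h' hzF
    · exact h')

lemma cast_sub_ne {ℓ : ℕ} (n : ℕ) (h : n ≠ ℓ) : ((n : ℕ) : F) + -((ℓ : ℕ) : F) ≠ 0 := by
  rw [← sub_eq_add_neg, sub_ne_zero]
  exact fun hc => h (Nat.cast_injective hc)

section Stages

variable {ℓ : ℕ} {W : Submodule F (MvPolynomial (SpIdx m) F)}
variable (hW : ∀ T ∈ PiFam F m (-(ℓ : F)), ∀ f ∈ W, T f ∈ W)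
include hW

omit hW in
lemma one_mem_of_td_zero {f : MvPolynomial (SpIdx m) F} (hf : f ∈ W) (h0 : f ≠ 0)
    (hd : f.totalDegree = 0) : (1 : MvPolynomial (SpIdx m) F) ∈ W := by
  have hsub : f.support ⊆ {0} := by
    intro s hs
    have := wt_le_td hs
    rw [hd] at this
    simp [wt_eq_zero (Nat.le_zero.mp this)]
  have hss : f.support = {0} := by
    rcases Finset.subset_singleton_iff.mp hsub with h | h
    · exact absurd (by rwa [← support_eq_empty]) h0
    · exact h
  have hco : coeff 0 f ≠ 0 := mem_support_iff.mp (by rw [hss]; exact Finset.mem_singleton_self 0)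
  have hfeq : f = coeff 0 f • M F 0 := by
    conv_lhs => rw [f.as_sum]
    rw [hss, Finset.sum_singleton, smul_M]
  obtain ⟨a, ha, hfeq2⟩ : ∃ a : F, a ≠ 0 ∧ f = a • M F 0 := ⟨coeff 0 f, hco, hfeq⟩
  rw [hfeq2] at hf
  have := mem_of_smul_mem ha hf
  rwa [M_zero] at this

lemma one_mem_aux : ∀ n, ∀ f : MvPolynomial (SpIdx m) F, f ∈ W → f ≠ 0 →
    f.totalDegree ≤ n → (1 : MvPolynomial (SpIdx m) F) ∈ W := by
  intro n
  induction n with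
  | zero =>
    intro f hf h0 hd
    exact one_mem_of_td_zero hf h0 (Nat.le_zero.mp hd)
  | succ n ih =>
    intro f hf h0 hd
    by_cases hall : ∀ z : SpIdx m, pderiv z f = 0
    · exact one_mem_of_td_zero hf h0 (td_zero_of_pderiv_zero hall)
    push_neg at hall
    obtain ⟨z, hz⟩ := hall
    have key : ∀ g : MvPolynomial (SpIdx m) F, g ∈ W → g ≠ 0 →
        g.totalDegree < f.totalDegree → (1 : MvPolynomial (SpIdx m) F) ∈ W := by
      intro g hg hg0 hlt
      exact ih g hg hg0 (by omega)
    by_cases hx : pderiv (x0 : SpIdx m) f = 0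
    · rcases z with j | i
      · rcases Fin.eq_zero_or_eq_succ j with rfl | ⟨i, rfl⟩
        · exact absurd hx hz
        · have hg : pderiv (vx i) f ∈ W := by
            have h3 := R3 hW i hf
            rw [hx, mul_zero, zero_sub] at h3
            simpa using W.neg_mem h3
          exact key _ hg hz (pderiv_td_lt hz)
      · have hg : pderiv (vy i) f ∈ W := by
          have h2 := R2 hW i hf
          rwa [hx, mul_zero, zero_add] at h2
        exact key _ hg hz (pderiv_td_lt hz)
    · exact key _ (R1 hW hf) hx (pderiv_td_lt hx)

lemma mono_le_mem (h1 : (1 : MvPolynomial (SpIdx m) F) ∈ W) :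
    ∀ n, n ≤ ℓ → ∀ s : SpIdx m →₀ ℕ, wt s ≤ n → M F s ∈ W := by
  intro n
  induction n with
  | zero =>
    intro _ s hs
    rw [wt_eq_zero (Nat.le_zero.mp hs), M_zero]
    exact h1
  | succ n ih =>
    intro hn s hs
    rcases Nat.lt_or_ge (wt s) (n + 1) with h | h
    · exact ih (by omega) s (by omega)
    have hwts : wt s = n + 1 := by omega
    have hs0 : s ≠ 0 := fun h0 => by rw [h0] at hwts; simp [wt] at hwts
    obtain ⟨z, hz⟩ := Finsupp.support_nonempty_iff.mpr hs0
    rw [Finsupp.mem_support_iff] at hz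
    have hz1 : 1 ≤ s z := Nat.one_le_iff_ne_zero.mpr hz
    set t := s - e z with hts
    have hst : t + e z = s := sub_e_add_e hz1
    have hwt : wt t = n := by
      have := wt_sub_e hz1
      rw [← hts] at this
      omega
    have ht : M F t ∈ W := ih (by omega) t (le_of_eq hwt)
    have hnl : n ≠ ℓ := by omega
    rcases z with j | i
    · rcases Fin.eq_zero_or_eq_succ j with rfl | ⟨i, rfl⟩
      · have h4 := R4 hW ht
        rw [DspC_M, mul_smul_comm, X_mul_M, hwt] at h4
        have := mem_of_smul_mem (cast_sub_ne n hnl) h4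
        have hx : t + e (x0 : SpIdx m) = s := hst
        rwa [hx] at this
      · have h6 := R6 hW i ht
        rw [DspC_M, hwt, pderiv_M, mul_smul_comm, mul_smul_comm, X_mul_M, X_mul_M] at h6
        have hfirst : ((t (vy i) : ℕ) : F) • M F (t - e (vy i) + e (x0 : SpIdx m)) ∈ W := by
          rcases Nat.eq_zero_or_pos (t (vy i)) with h0 | h0
          · rw [h0]; simp
          · refine W.smul_mem _ (ih (by omega) _ ?_)
            rw [wt_add, wt_e]
            have := wt_sub_e (z := vy i) h0
            omega
        have hsecond := extract_add' h6 hfirst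
        have := mem_of_smul_mem (cast_sub_ne n hnl) hsecond
        have hx : t + e (vx i) = s := hst
        rwa [hx] at this
    · have h5 := R5 hW i ht
      rw [DspC_M, hwt, pderiv_M, mul_smul_comm, mul_smul_comm, X_mul_M, X_mul_M] at h5
      have hfirst : ((t (vx i) : ℕ) : F) • M F (t - e (vx i) + e (x0 : SpIdx m)) ∈ W := by
        rcases Nat.eq_zero_or_pos (t (vx i)) with h0 | h0
        · rw [h0]; simp
        · refine W.smul_mem _ (ih (by omega) _ ?_)
          rw [wt_add, wt_e]
          have := wt_sub_e (z := vx i) h0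
          omega
      have hsecond := extract_sub' h5 hfirst
      have := mem_of_smul_mem (cast_sub_ne n hnl) hsecond
      have hx : t + e (vy i) = s := hst
      rwa [hx] at this

lemma rtd_le_W (h1 : (1 : MvPolynomial (SpIdx m) F) ∈ W) :
    restrictTotalDegree (SpIdx m) F ℓ ≤ W := by
  intro p hp
  rw [mem_restrictTotalDegree] at hp
  rw [p.as_sum]
  refine Submodule.sum_mem W fun v hv => ?_
  rw [← smul_M]
  exact W.smul_mem _ (mono_le_mem hW h1 ℓ le_rfl v (le_trans (wt_le_td hv) hp))

end Stages

lemma apply_sub_self (s : SpIdx m →₀ ℕ) (z : SpIdx m) : (s - e z) z = s z - 1 := by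
  rw [Finsupp.tsub_apply]; simp [e]

lemma apply_sub_ne (s : SpIdx m →₀ ℕ) {z z' : SpIdx m} (h : z' ≠ z) : (s - e z) z' = s z' := by
  rw [Finsupp.tsub_apply]
  simp [e, Finsupp.single_apply, if_neg (Ne.symm h)]

lemma apply_add_self (s : SpIdx m →₀ ℕ) (z : SpIdx m) : (s + e z) z = s z + 1 := by
  rw [Finsupp.add_apply]; simp [e]

lemma apply_add_ne (s : SpIdx m →₀ ℕ) {z z' : SpIdx m} (h : z' ≠ z) : (s + e z) z' = s z' := by
  rw [Finsupp.add_apply]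
  simp [e, Finsupp.single_apply, if_neg (Ne.symm h)]

lemma coeff_sum_monomial (A : Finset (SpIdx m →₀ ℕ)) (c : (SpIdx m →₀ ℕ) → F)
    (s : SpIdx m →₀ ℕ) :
    coeff s (∑ v ∈ A, monomial v (c v)) = if s ∈ A then c s else 0 := by
  rw [MvPolynomial.coeff_sum]
  simp only [coeff_monomial]
  exact Finset.sum_ite_eq' A s c

lemma sub_sub_comm (s a b : SpIdx m →₀ ℕ) : s - a - b = s - b - a := by
  ext z
  simp only [Finsupp.tsub_apply]
  omega

section StageC

variable {ℓ : ℕ} {W : Submodule F (MvPolynomial (SpIdx m) F)}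
variable (hW : ∀ T ∈ PiFam F m (-(ℓ : F)), ∀ f ∈ W, T f ∈ W)
include hW

omit hW in
lemma low_coeff_zero {d : ℕ} (hd : 0 < d)
    (hmin : ∀ g ∈ W, g.totalDegree < d → g.totalDegree ≤ ℓ)
    {q : MvPolynomial (SpIdx m) F} (hq : q ∈ W)
    (hhigh : ∀ s : SpIdx m →₀ ℕ, d ≤ wt s → coeff s q = 0) :
    ∀ t : SpIdx m →₀ ℕ, ℓ < wt t → coeff t q = 0 := by
  intro t hlt
  by_cases h0 : q = 0
  · simp [h0]
  have htd : q.totalDegree < d := by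
    rw [td_eq_sup, Finset.sup_lt_iff (by simpa using hd)]
    intro s hs
    rcases Nat.lt_or_ge (wt s) d with h | h
    · exact h
    · exact absurd (hhigh s h) (mem_support_iff.mp hs)
  exact coeff_eq_zero_of_td_lt (lt_of_le_of_lt (hmin q hq htd) hlt)

lemma stageC_high (hrtd : restrictTotalDegree (SpIdx m) F ℓ ≤ W)
    {f : MvPolynomial (SpIdx m) F} (hfW : f ∈ W) (hgt : ℓ < f.totalDegree)
    (hd : f.totalDegree = ℓ + 1) :
    ∃ g : MvPolynomial (SpIdx m) F, g ∈ W ∧ g ≠ 0 ∧ ∀ s ∈ g.support, wt s = ℓ + 1 := by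
  classical
  set g : MvPolynomial (SpIdx m) F :=
    ∑ v ∈ f.support.filter (fun v => wt v = ℓ + 1), monomial v (coeff v f) with hg
  set low : MvPolynomial (SpIdx m) F :=
    ∑ v ∈ f.support.filter (fun v => ¬ wt v = ℓ + 1), monomial v (coeff v f) with hlow
  have hsplit : f = g + low := by
    conv_lhs => rw [f.as_sum]
    rw [hg, hlow, Finset.sum_filter_add_sum_filter_not]
  have hlowmem : low ∈ restrictTotalDegree (SpIdx m) F ℓ := by
    rw [hlow]
    refine Submodule.sum_mem _ fun v hv => ?_
    rw [Finset.mem_filter] at hv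
    have h1 := wt_le_td hv.1
    rw [hd] at h1
    rw [← smul_M]
    refine Submodule.smul_mem _ _ (M_mem_rtd ?_)
    have := hv.2
    omega
  have hgW : g ∈ W := by
    have : g = f - low := by rw [hsplit]; ring
    rw [this]
    exact W.sub_mem hfW (hrtd hlowmem)
  have hg0 : g ≠ 0 := by
    intro h0
    rw [h0, zero_add] at hsplit
    rw [hsplit] at hgt
    rw [mem_restrictTotalDegree] at hlowmem
    omega
  refine ⟨g, hgW, hg0, fun s hs => ?_⟩
  rw [mem_support_iff, hg, coeff_sum_monomial] at hs
  by_cases hmem : s ∈ f.support.filter (fun v => wt v = ℓ + 1)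
  · exact (Finset.mem_filter.mp hmem).2
  · rw [if_neg hmem] at hs
    exact absurd rfl hs

lemma stageC_impossible {f : MvPolynomial (SpIdx m) F} (hfW : f ∈ W) (hgt : ℓ < f.totalDegree)
    (hmin : ∀ g ∈ W, g.totalDegree < f.totalDegree → g.totalDegree ≤ ℓ)
    (hd : ℓ + 2 ≤ f.totalDegree) : False := by
  classical
  set d := f.totalDegree with hdd
  have hdpos : 0 < d := by omega
  have hf0 : f ≠ 0 := by
    intro h0
    rw [h0, totalDegree_zero] at hdd
    omega
  -- vanishing of x0-divisible top coefficients
  have keyx0 : ∀ u : SpIdx m →₀ ℕ, wt u = d → 1 ≤ u (x0 : SpIdx m) → coeff u f = 0 := by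
    have hp : pderiv (x0 : SpIdx m) f ∈ W := R1 hW hfW
    have hhigh : ∀ s : SpIdx m →₀ ℕ, d ≤ wt s → coeff s (pderiv (x0 : SpIdx m) f) = 0 := by
      intro s hs
      rw [coeff_pderiv]
      have : coeff (s + e (x0 : SpIdx m)) f = 0 := by
        refine coeff_eq_zero_of_td_lt ?_
        rw [wt_add, wt_e, ← hdd]
        omega
      rw [this, mul_zero]
    have hlow := low_coeff_zero hdpos hmin hp hhigh
    intro u hu hx
    have ht : wt (u - e (x0 : SpIdx m)) + 1 = wt u := wt_sub_e hx
    have h1 := hlow (u - e (x0 : SpIdx m)) (by omega)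
    rw [coeff_pderiv, sub_e_add_e hx] at h1
    rcases mul_eq_zero.mp h1 with h' | h'
    · exact absurd h' (Nat.cast_ne_zero.mpr (by omega))
    · exact h'
  -- vanishing of top coefficients shifted into x0
  have keyx0' : ∀ u : SpIdx m →₀ ℕ, wt u = d → coeff (u + e (x0 : SpIdx m) - e (x0 : SpIdx m)) f = 0 → True := fun _ _ _ => trivial
  have keyA : ∀ i : Fin m, ∀ t : SpIdx m →₀ ℕ, wt t = d - 1 →
      coeff t (X (vx i) * pderiv (x0 : SpIdx m) f + pderiv (vy i) f) = 0 := by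
    intro i
    have hq : X (vx i) * pderiv (x0 : SpIdx m) f + pderiv (vy i) f ∈ W := R2 hW i hfW
    have hhigh : ∀ s : SpIdx m →₀ ℕ, d ≤ wt s →
        coeff s (X (vx i) * pderiv (x0 : SpIdx m) f + pderiv (vy i) f) = 0 := by
      intro s hs
      rw [coeff_add, coeff_XD, coeff_pderiv]
      have h2 : coeff (s + e (vy i)) f = 0 := by
        refine coeff_eq_zero_of_td_lt ?_
        rw [wt_add, wt_e, ← hdd]
        omega
      rw [h2, mul_zero, add_zero]
      split
      · rename_i hsx
        have h3 : coeff (s - e (vx i) + e (x0 : SpIdx m)) f = 0 := by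
          have hwt2 : wt (s - e (vx i) + e (x0 : SpIdx m)) = wt s := by
            rw [wt_add, wt_e]
            have := wt_sub_e hsx
            omega
          rcases Nat.lt_or_ge d (wt s) with h | h
          · exact coeff_eq_zero_of_td_lt (by rw [hwt2, ← hdd]; omega)
          · have hwts : wt s = d := by omega
            refine keyx0 _ (by rw [hwt2, hwts]) ?_
            rw [apply_add_self]
            omega
        rw [h3, mul_zero]
      · rfl
    intro t hwt
    exact low_coeff_zero hdpos hmin hq hhigh t (by omega)
  have keyB : ∀ i : Fin m, ∀ t : SpIdx m →₀ ℕ, wt t = d - 1 →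
      coeff t (X (vy i) * pderiv (x0 : SpIdx m) f - pderiv (vx i) f) = 0 := by
    intro i
    have hq : X (vy i) * pderiv (x0 : SpIdx m) f - pderiv (vx i) f ∈ W := R3 hW i hfW
    have hhigh : ∀ s : SpIdx m →₀ ℕ, d ≤ wt s →
        coeff s (X (vy i) * pderiv (x0 : SpIdx m) f - pderiv (vx i) f) = 0 := by
      intro s hs
      rw [coeff_sub, coeff_XD, coeff_pderiv]
      have h2 : coeff (s + e (vx i)) f = 0 := by
        refine coeff_eq_zero_of_td_lt ?_
        rw [wt_add, wt_e, ← hdd]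
        omega
      rw [h2, mul_zero, sub_zero]
      split
      · rename_i hsx
        have h3 : coeff (s - e (vy i) + e (x0 : SpIdx m)) f = 0 := by
          have hwt2 : wt (s - e (vy i) + e (x0 : SpIdx m)) = wt s := by
            rw [wt_add, wt_e]
            have := wt_sub_e hsx
            omega
          rcases Nat.lt_or_ge d (wt s) with h | h
          · exact coeff_eq_zero_of_td_lt (by rw [hwt2, ← hdd]; omega)
          · have hwts : wt s = d := by omega
            refine keyx0 _ (by rw [hwt2, hwts]) ?_
            rw [apply_add_self]
            omega
        rw [h3, mul_zero]
      · rfl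
    intro t hwt
    exact low_coeff_zero hdpos hmin hq hhigh t (by omega)
  -- all top coefficients vanish
  have hall : ∀ s : SpIdx m →₀ ℕ, wt s = d → coeff s f = 0 := by
    intro s hsd
    by_cases hx : 1 ≤ s (x0 : SpIdx m)
    · exact keyx0 s hsd hx
    have hx0 : s (x0 : SpIdx m) = 0 := by omega
    set gi : Fin m → F := fun i =>
      if 1 ≤ s (vx i) ∧ 1 ≤ s (vy i) then coeff (s - e (vx i) - e (vy i) + e (x0 : SpIdx m)) f
      else 0 with hgi
    have clx : ∀ i : Fin m, ((s (vx i) : ℕ) : F) * coeff s f = gi i := by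
      intro i
      by_cases h1 : 1 ≤ s (vx i)
      · have hB := keyB i (s - e (vx i)) (by have := wt_sub_e h1; omega)
        rw [coeff_sub, coeff_XD, coeff_pderiv] at hB
        have hc1 : (s - e (vx i)) (vy i) = s (vy i) := apply_sub_ne s (vx_ne_vy i i).symm
        have hc2 : (s - e (vx i)) (vx i) + 1 = s (vx i) := by
          rw [apply_sub_self]; omega
        have hc3 : (s - e (vx i)) + e (vx i) = s := sub_e_add_e h1
        by_cases h2 : 1 ≤ s (vy i)
        · rw [if_pos (by rw [hc1]; exact h2)] at hB
          have hc4 : (s - e (vx i) - e (vy i)) (x0 : SpIdx m) + 1 = 1 := by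
            rw [apply_sub_ne _ (x0_ne_vy i), apply_sub_ne _ (x0_ne_vx i), hx0]
          rw [hc4, hc2, hc3] at hB
          simp only [hgi, if_pos (And.intro h1 h2)]
          push_cast at hB ⊢
          linear_combination -hB
        · rw [if_neg (by rw [hc1]; exact h2)] at hB
          rw [hc2, hc3] at hB
          simp only [hgi, if_neg (show ¬ (1 ≤ s (vx i) ∧ 1 ≤ s (vy i)) by tauto)]
          push_cast at hB ⊢
          linear_combination -hB
      · have h0 : s (vx i) = 0 := by omega
        simp only [hgi, if_neg (show ¬ (1 ≤ s (vx i) ∧ 1 ≤ s (vy i)) by tauto), h0]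
        simp
    have cly : ∀ i : Fin m, ((s (vy i) : ℕ) : F) * coeff s f = -gi i := by
      intro i
      by_cases h1 : 1 ≤ s (vy i)
      · have hA := keyA i (s - e (vy i)) (by have := wt_sub_e h1; omega)
        rw [coeff_add, coeff_XD, coeff_pderiv] at hA
        have hc1 : (s - e (vy i)) (vx i) = s (vx i) := apply_sub_ne s (vx_ne_vy i i)
        have hc2 : (s - e (vy i)) (vy i) + 1 = s (vy i) := by
          rw [apply_sub_self]; omega
        have hc3 : (s - e (vy i)) + e (vy i) = s := sub_e_add_e h1
        by_cases h2 : 1 ≤ s (vx i)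
        · rw [if_pos (by rw [hc1]; exact h2)] at hA
          have hc4 : (s - e (vy i) - e (vx i)) (x0 : SpIdx m) + 1 = 1 := by
            rw [apply_sub_ne _ (x0_ne_vx i), apply_sub_ne _ (x0_ne_vy i), hx0]
          have hc5 : s - e (vy i) - e (vx i) + e (x0 : SpIdx m)
              = s - e (vx i) - e (vy i) + e (x0 : SpIdx m) := by
            rw [sub_sub_comm]
          rw [hc4, hc2, hc3, hc5] at hA
          simp only [hgi, if_pos (And.intro h2 h1)]
          push_cast at hA ⊢
          linear_combination hA
        · rw [if_neg (by rw [hc1]; exact h2)] at hA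
          rw [hc2, hc3] at hA
          simp only [hgi, if_neg (show ¬ (1 ≤ s (vx i) ∧ 1 ≤ s (vy i)) by tauto)]
          push_cast at hA ⊢
          linear_combination hA
      · have h0 : s (vy i) = 0 := by omega
        simp only [hgi, if_neg (show ¬ (1 ≤ s (vx i) ∧ 1 ≤ s (vy i)) by tauto), h0]
        simp
    -- sum up
    have hsum : ((d : ℕ) : F) * coeff s f = 0 := by
      have hw : (∑ i : Fin m, s (vx i)) + (∑ i : Fin m, s (vy i)) = d := by
        have := wt_eq_sum s
        rw [Fintype.sum_sum_type] at this
        rw [Fin.sum_univ_succ] at this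
        have hx0' : s (Sum.inl 0) = 0 := hx0
        rw [hx0', zero_add] at this
        rw [← hsd, this]
        rfl
      calc ((d : ℕ) : F) * coeff s f
          = (∑ i : Fin m, ((s (vx i) : ℕ) : F) * coeff s f)
            + (∑ i : Fin m, ((s (vy i) : ℕ) : F) * coeff s f) := by
            rw [← Finset.sum_mul, ← Finset.sum_mul, ← add_mul]
            congr 1
            rw [← Nat.cast_sum, ← Nat.cast_sum, ← Nat.cast_add, hw]
        _ = (∑ i : Fin m, gi i) + (∑ i : Fin m, -gi i) := by
            congr 1
            · exact Finset.sum_congr rfl fun i _ => clx i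
            · exact Finset.sum_congr rfl fun i _ => cly i
        _ = 0 := by rw [← Finset.sum_add_distrib]; simp
    rcases mul_eq_zero.mp hsum with h' | h'
    · exact absurd h' (Nat.cast_ne_zero.mpr (by omega))
    · exact h'
  obtain ⟨s, hs, hwts⟩ := exists_wt_eq_td hf0
  exact (mem_support_iff.mp hs) (hall s hwts)

lemma stageC (hrtd : restrictTotalDegree (SpIdx m) F ℓ ≤ W)
    (hnot : ¬ W ≤ restrictTotalDegree (SpIdx m) F ℓ) :
    ∃ g : MvPolynomial (SpIdx m) F, g ∈ W ∧ g ≠ 0 ∧ ∀ s ∈ g.support, wt s = ℓ + 1 := by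
  rw [SetLike.le_def] at hnot
  push_neg at hnot
  obtain ⟨f0, hf0W, hf0⟩ := hnot
  rw [mem_restrictTotalDegree, not_le] at hf0
  have hex : ∃ n, ∃ f, f ∈ W ∧ ℓ < f.totalDegree ∧ f.totalDegree = n :=
    ⟨f0.totalDegree, f0, hf0W, hf0, rfl⟩
  classical
  obtain ⟨f, hfW, hgt, hdeq⟩ := Nat.find_spec hex
  have hmin : ∀ g ∈ W, g.totalDegree < f.totalDegree → g.totalDegree ≤ ℓ := by
    intro g hg hlt
    by_contra hc
    rw [not_le] at hc
    have := Nat.find_min hex (show g.totalDegree < Nat.find hex by omega)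
    exact this ⟨g, hg, hc, rfl⟩
  rcases Nat.lt_or_ge (f.totalDegree) (ℓ + 2) with h | h
  · exact stageC_high hW hrtd hfW hgt (by omega)
  · exact absurd (stageC_impossible hW hfW hgt hmin h) (fun x => x)

end StageC

section StageD

variable {ℓ : ℕ} {W : Submodule F (MvPolynomial (SpIdx m) F)}

lemma qfree_pderiv_zero {q : SpIdx m} {f : MvPolynomial (SpIdx m) F}
    (h : ∀ s ∈ f.support, s q = 0) : pderiv q f = 0 := by
  apply MvPolynomial.ext
  intro t
  rw [coeff_pderiv, coeff_zero]
  by_cases hc : coeff (t + e q) f = 0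
  · rw [hc, mul_zero]
  · have := h _ (mem_support_iff.mpr hc)
    rw [apply_add_self] at this
    omega

lemma supp_XD {z z' : SpIdx m} {v : MvPolynomial (SpIdx m) F} {s : SpIdx m →₀ ℕ}
    (hs : s ∈ (X z * pderiv z' v).support) :
    1 ≤ s z ∧ s - e z + e z' ∈ v.support := by
  rw [mem_support_iff, coeff_XD] at hs
  split at hs
  · rename_i h1
    refine ⟨h1, ?_⟩
    rw [mem_support_iff]
    intro hc
    rw [hc, mul_zero] at hs
    exact hs rfl
  · exact absurd rfl hs

lemma hom_XD {z z' : SpIdx m} {n : ℕ} {v : MvPolynomial (SpIdx m) F}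
    (h : ∀ s ∈ v.support, wt s = n) :
    ∀ s ∈ (X z * pderiv z' v).support, wt s = n := by
  intro s hs
  obtain ⟨h1, h2⟩ := supp_XD hs
  have h3 := h _ h2
  rw [wt_add, wt_e] at h3
  have h4 := wt_sub_e h1
  omega

lemma qfree_XD {q z z' : SpIdx m} {v : MvPolynomial (SpIdx m) F} (hq : q ≠ z)
    (h : ∀ s ∈ v.support, s q = 0) :
    ∀ s ∈ (X z * pderiv z' v).support, s q = 0 := by
  intro s hs
  obtain ⟨h1, h2⟩ := supp_XD hs
  have h3 := h _ h2
  by_cases hq' : q = z'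
  · subst hq'
    rw [apply_add_self] at h3
    omega
  · rw [apply_add_ne _ (fun hc => hq' hc), apply_sub_ne _ hq] at h3
    exact h3

lemma KL (z z' : SpIdx m) (hzz : z' ≠ z) (P : MvPolynomial (SpIdx m) F → Prop)
    (hP : ∀ v, P v → P (X z * pderiv z' v)) :
    ∀ K : ℕ, ∀ v : MvPolynomial (SpIdx m) F, P v → v ≠ 0 →
      (v.support.sup fun s => s z') ≤ K →
      ∃ u, P u ∧ u ≠ 0 ∧ ∀ s ∈ u.support, s z' = 0 := by
  intro K
  induction K with
  | zero =>
    intro v hv h0 hsup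
    refine ⟨v, hv, h0, fun s hs => ?_⟩
    have h2 : s z' ≤ 0 := le_trans (Finset.le_sup (f := fun s => s z') hs) hsup
    omega
  | succ K ih =>
    intro v hv h0 hsup
    rcases Nat.lt_or_ge (v.support.sup fun s => s z') (K + 1) with h | h
    · exact ih v hv h0 (by omega)
    have hsupeq : (v.support.sup fun s => s z') = K + 1 := le_antisymm hsup h
    obtain ⟨s0, hs0, hs0v⟩ := Finset.exists_mem_eq_sup v.support
      (MvPolynomial.support_nonempty.mpr h0) (fun s => s z')
    have hs0z : s0 z' = K + 1 := by rw [← hs0v, hsupeq]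
    have hnz : X z * pderiv z' v ≠ 0 := by
      intro hzero
      have hco : coeff (s0 - e z' + e z) (X z * pderiv z' v)
          = ((s0 z' : ℕ) : F) * coeff s0 v := by
        rw [coeff_XD, if_pos (by rw [apply_add_self]; omega), add_tsub_cancel_right,
          sub_e_add_e (show 1 ≤ s0 z' by omega)]
        have harg : (s0 - e z') z' + 1 = s0 z' := by rw [apply_sub_self]; omega
        rw [harg]
      rw [hzero, coeff_zero] at hco
      have hc1 : coeff s0 v ≠ 0 := mem_support_iff.mp hs0
      have hc2 : ((s0 z' : ℕ) : F) ≠ 0 := Nat.cast_ne_zero.mpr (by omega)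
      rcases mul_eq_zero.mp hco.symm with h' | h'
      · exact hc2 h'
      · exact hc1 h'
    have hsup' : ((X z * pderiv z' v).support.sup fun s => s z') ≤ K := by
      refine Finset.sup_le fun s hs => ?_
      obtain ⟨h1, h2⟩ := supp_XD hs
      have h3 : (s - e z + e z') z' ≤ K + 1 :=
        le_trans (Finset.le_sup (f := fun s => s z') h2) hsup
      rw [apply_add_self, apply_sub_ne _ hzz] at h3
      omega
    exact ih _ (hP v hv) hnz hsup'

variable (hW : ∀ T ∈ PiFam F m (-(ℓ : F)), ∀ f ∈ W, T f ∈ W)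
include hW

lemma pderiv_mem_rtd {v : MvPolynomial (SpIdx m) F} (hhom : ∀ s ∈ v.support, wt s = ℓ + 1)
    (z : SpIdx m) : pderiv z v ∈ restrictTotalDegree (SpIdx m) F ℓ := by
  rw [mem_restrictTotalDegree, td_eq_sup]
  refine Finset.sup_le fun t ht => ?_
  have h2 := hhom _ (supp_pderiv ht)
  rw [wt_add, wt_e] at h2
  omega

lemma phase1 (i1 : Fin m) (hrtd : restrictTotalDegree (SpIdx m) F ℓ ≤ W)
    {g : MvPolynomial (SpIdx m) F} (hg : g ∈ W) (h0 : g ≠ 0)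
    (hhom : ∀ s ∈ g.support, wt s = ℓ + 1) :
    ∃ u : MvPolynomial (SpIdx m) F, u ∈ W ∧ (∀ s ∈ u.support, wt s = ℓ + 1) ∧ u ≠ 0 ∧
      ∀ s ∈ u.support, s (x0 : SpIdx m) = 0 := by
  obtain ⟨u, hu, h0u, hfree⟩ := KL (vx i1) (x0 : SpIdx m) (x0_ne_vx i1)
    (fun v => v ∈ W ∧ ∀ s ∈ v.support, wt s = ℓ + 1)
    (fun v hv => by
      refine ⟨?_, hom_XD hv.2⟩
      exact extract_add (R2 hW i1 hv.1) (hrtd (pderiv_mem_rtd hW hv.2 (vy i1))))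
    (g.support.sup fun s => s (x0 : SpIdx m)) g ⟨hg, hhom⟩ h0 le_rfl
  exact ⟨u, hu.1, hu.2, h0u, hfree⟩

omit hW in
lemma two_smul_extract {u : MvPolynomial (SpIdx m) F} (h : u + u ∈ W) : u ∈ W := by
  have h2 : (2 : F) • u ∈ W := by rwa [two_smul]
  exact mem_of_smul_mem two_ne_zero h2

lemma phase2 (I : Finset (Fin m)) :
    ∀ u : MvPolynomial (SpIdx m) F, u ∈ W → (∀ s ∈ u.support, wt s = ℓ + 1) → u ≠ 0 →
      (∀ s ∈ u.support, s (x0 : SpIdx m) = 0) →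
      ∃ u', u' ∈ W ∧ (∀ s ∈ u'.support, wt s = ℓ + 1) ∧ u' ≠ 0 ∧
        (∀ s ∈ u'.support, s (x0 : SpIdx m) = 0) ∧
        ∀ i ∈ I, ∀ s ∈ u'.support, s (vy i) = 0 := by
  classical
  induction I using Finset.induction with
  | empty =>
    intro u h1 h2 h3 h4
    exact ⟨u, h1, h2, h3, h4, by simp⟩
  | @insert i0 I hni ih =>
    intro u h1 h2 h3 h4
    obtain ⟨u1, hu1W, hu1hom, hu10, hu1x0, hu1I⟩ := ih u h1 h2 h3 h4
    obtain ⟨u2, ⟨h2W, h2hom, h2x0, h2I⟩, h20, h2y⟩ := KL (vx i0) (vy i0)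
      (Ne.symm (vx_ne_vy i0 i0))
      (fun v => v ∈ W ∧ (∀ s ∈ v.support, wt s = ℓ + 1) ∧
        (∀ s ∈ v.support, s (x0 : SpIdx m) = 0) ∧ ∀ i ∈ I, ∀ s ∈ v.support, s (vy i) = 0)
      (fun v hv => by
        obtain ⟨hvW, hvhom, hvx0, hvI⟩ := hv
        refine ⟨?_, hom_XD hvhom, qfree_XD (x0_ne_vx i0) hvx0,
          fun i hi => qfree_XD (vx_ne_vy i0 i).symm (hvI i hi)⟩
        exact two_smul_extract (R8 hW i0 i0 hvW))
      (u1.support.sup fun s => s (vy i0)) u1 ⟨hu1W, hu1hom, hu1x0, hu1I⟩ hu10 le_rfl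
    refine ⟨u2, h2W, h2hom, h20, h2x0, fun i hi => ?_⟩
    rcases Finset.mem_insert.mp hi with rfl | hi'
    · exact h2y
    · exact h2I i hi'

lemma phase3 (i1 : Fin m) (J : Finset (Fin m)) (hJ : i1 ∉ J) :
    ∀ u : MvPolynomial (SpIdx m) F, u ∈ W → (∀ s ∈ u.support, wt s = ℓ + 1) → u ≠ 0 →
      (∀ s ∈ u.support, s (x0 : SpIdx m) = 0) →
      (∀ i : Fin m, ∀ s ∈ u.support, s (vy i) = 0) →
      ∃ u', u' ∈ W ∧ (∀ s ∈ u'.support, wt s = ℓ + 1) ∧ u' ≠ 0 ∧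
        (∀ s ∈ u'.support, s (x0 : SpIdx m) = 0) ∧
        (∀ i : Fin m, ∀ s ∈ u'.support, s (vy i) = 0) ∧
        ∀ j ∈ J, ∀ s ∈ u'.support, s (vx j) = 0 := by
  classical
  induction J using Finset.induction with
  | empty =>
    intro u h1 h2 h3 h4 h5
    exact ⟨u, h1, h2, h3, h4, h5, by simp⟩
  | @insert j0 J hnj ih =>
    intro u h1 h2 h3 h4 h5
    have hJ' : i1 ∉ J := fun hc => hJ (Finset.mem_insert_of_mem hc)
    have hij0 : j0 ≠ i1 := fun hc => hJ (by rw [← hc]; exact Finset.mem_insert_self _ _)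
    obtain ⟨u1, hu1W, hu1hom, hu10, hu1x0, hu1y, hu1J⟩ := ih hJ' u h1 h2 h3 h4 h5
    obtain ⟨u2, ⟨h2W, h2hom, h2x0, h2y, h2J⟩, h20, h2x⟩ := KL (vx i1) (vx j0)
      (fun hc => hij0 (vx_inj hc))
      (fun v => v ∈ W ∧ (∀ s ∈ v.support, wt s = ℓ + 1) ∧
        (∀ s ∈ v.support, s (x0 : SpIdx m) = 0) ∧
        (∀ i : Fin m, ∀ s ∈ v.support, s (vy i) = 0) ∧
        ∀ j ∈ J, ∀ s ∈ v.support, s (vx j) = 0)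
      (fun v hv => by
        obtain ⟨hvW, hvhom, hvx0, hvy, hvJ⟩ := hv
        have hmove : X (vx i1) * pderiv (vx j0) v ∈ W := by
          have h7 := R7 hW i1 j0 hvW
          rw [qfree_pderiv_zero (hvy i1), mul_zero, sub_zero] at h7
          exact h7
        refine ⟨hmove, hom_XD hvhom, qfree_XD (x0_ne_vx i1) hvx0,
          fun i => qfree_XD (Ne.symm (vx_ne_vy i1 i)) (hvy i),
          fun j hj => qfree_XD ?_ (hvJ j hj)⟩
        intro hc
        exact hJ' (by rw [← vx_inj hc]; exact hj))
      (u1.support.sup fun s => s (vx j0)) u1 ⟨hu1W, hu1hom, hu1x0, hu1y, hu1J⟩ hu10 le_rfl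
    refine ⟨u2, h2W, h2hom, h20, h2x0, h2y, fun j hj => ?_⟩
    rcases Finset.mem_insert.mp hj with rfl | hj'
    · exact h2x
    · exact h2J j hj'

lemma stageD (i1 : Fin m) (hrtd : restrictTotalDegree (SpIdx m) F ℓ ≤ W)
    {g : MvPolynomial (SpIdx m) F} (hg : g ∈ W) (h0 : g ≠ 0)
    (hhom : ∀ s ∈ g.support, wt s = ℓ + 1) :
    M F (Finsupp.single (vx i1 : SpIdx m) (ℓ + 1)) ∈ W := by
  obtain ⟨u, huW, huhom, hu0, hux0⟩ := phase1 hW i1 hrtd hg h0 hhom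
  obtain ⟨u', hW', hhom', h0', hx0', hy'⟩ := phase2 hW Finset.univ u huW huhom hu0 hux0
  obtain ⟨v, hvW, hvhom, hv0, hvx0, hvy, hvx⟩ := phase3 hW i1 (Finset.univ.erase i1)
    (Finset.notMem_erase i1 _) u' hW' hhom' h0' hx0'
    (fun i => hy' i (Finset.mem_univ i))
  have hsupp : ∀ s ∈ v.support, s = Finsupp.single (vx i1 : SpIdx m) (ℓ + 1) := by
    intro s hs
    have hwt := hvhom _ hs
    have hco : ∀ z : SpIdx m, z ≠ vx i1 → s z = 0 := by
      intro z hz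
      rcases z with j | i
      · rcases Fin.eq_zero_or_eq_succ j with rfl | ⟨i, rfl⟩
        · exact hvx0 s hs
        · have hne : i ≠ i1 := fun hc => hz (by rw [hc]; rfl)
          exact hvx i (Finset.mem_erase.mpr ⟨hne, Finset.mem_univ _⟩) s hs
      · exact hvy i s hs
    have hs_eq : s = Finsupp.single (vx i1 : SpIdx m) (s (vx i1)) := by
      ext z
      by_cases hz : z = vx i1
      · subst hz; simp [Finsupp.single_apply]
      · rw [hco z hz, Finsupp.single_apply, if_neg (fun hc => hz hc.symm)]
    rw [hs_eq, wt_single] at hwt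
    rw [hs_eq, hwt]
  obtain ⟨s, hs⟩ := MvPolynomial.support_nonempty.mpr hv0
  have hsingleton : v.support = {s} :=
    Finset.eq_singleton_iff_unique_mem.mpr ⟨hs, fun t ht => (hsupp t ht).trans (hsupp s hs).symm⟩
  have hveq : v = coeff s v • M F s := by
    conv_lhs => rw [v.as_sum]
    rw [hsingleton, Finset.sum_singleton, smul_M]
  rw [hveq] at hvW
  have := mem_of_smul_mem (mem_support_iff.mp hs) hvW
  rwa [hsupp s hs] at this

end StageD

section StageE

variable {ℓ : ℕ} {W : Submodule F (MvPolynomial (SpIdx m) F)}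

lemma XD_M (z z' : SpIdx m) (s : SpIdx m →₀ ℕ) :
    X z * pderiv z' (M F s) = ((s z' : ℕ) : F) • M F (s - e z' + e z) := by
  rw [pderiv_M, mul_smul_comm, X_mul_M]

lemma swap_cancel (u : SpIdx m →₀ ℕ) (z z' : SpIdx m) : (u + e z + e z') - e z = u + e z' := by
  rw [add_right_comm, add_tsub_cancel_right]

lemma single_succ (z : SpIdx m) (a : ℕ) :
    Finsupp.single z a + e z = Finsupp.single z (a + 1) := by
  rw [e, ← Finsupp.single_add]

variable (hW : ∀ T ∈ PiFam F m (-(ℓ : F)), ∀ f ∈ W, T f ∈ W)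
include hW

lemma R4_M {s : SpIdx m →₀ ℕ} (hs : M F s ∈ W) (hwt : ℓ < wt s) :
    M F (s + e (x0 : SpIdx m)) ∈ W := by
  have h4 := R4 hW hs
  rw [DspC_M, mul_smul_comm, X_mul_M] at h4
  exact mem_of_smul_mem (cast_sub_ne _ (by omega)) h4

lemma trick (hrtd : restrictTotalDegree (SpIdx m) F ℓ ≤ W) (σ : SpIdx m →₀ ℕ) (a : ℕ)
    (hs0 : σ (x0 : SpIdx m) = 0) (hwt : wt σ + a = ℓ) (i : Fin m)
    (h1 : M F (σ + Finsupp.single (x0 : SpIdx m) a + e (vx i)) ∈ W) :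
    (∀ j, M F (σ + Finsupp.single (x0 : SpIdx m) a + e (vx j)) ∈ W) ∧
    (∀ j, M F (σ + Finsupp.single (x0 : SpIdx m) a + e (vy j)) ∈ W) ∧
    M F (σ + Finsupp.single (x0 : SpIdx m) (a + 1)) ∈ W := by
  set w : SpIdx m →₀ ℕ := σ + Finsupp.single (x0 : SpIdx m) a with hw
  have hwx0 : w (x0 : SpIdx m) = a := by
    rw [hw, Finsupp.add_apply, hs0, Finsupp.single_eq_same, zero_add]
  have hwvx : ∀ j, w (vx j) = σ (vx j) := fun j => by
    rw [hw, Finsupp.add_apply, Finsupp.single_apply, if_neg (x0_ne_vx j), add_zero]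
  have hwvy : ∀ j, w (vy j) = σ (vy j) := fun j => by
    rw [hw, Finsupp.add_apply, Finsupp.single_apply, if_neg (x0_ne_vy j), add_zero]
  have hwwt : wt w = ℓ := by rw [hw, wt_add, wt_single, hwt]
  have hwt1x : ∀ j, wt (w + e (vx j)) = ℓ + 1 := fun j => by rw [wt_add, wt_e, hwwt]
  have hwt1y : ∀ j, wt (w + e (vy j)) = ℓ + 1 := fun j => by rw [wt_add, wt_e, hwwt]
  -- t1 : the y-partner
  have h2 : M F (w + e (vy i)) ∈ W := by
    have h9 := R9 hW i i h1
    rw [XD_M, apply_add_self, add_tsub_cancel_right] at h9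
    exact mem_of_smul_mem (Nat.cast_ne_zero.mpr (Nat.succ_ne_zero _)) (two_smul_extract h9)
  -- t2 : multiply both by x0
  have u1 : M F (w + e (vx i) + e (x0 : SpIdx m)) ∈ W := R4_M hW h1 (by rw [hwt1x]; omega)
  have u2 : M F (w + e (vy i) + e (x0 : SpIdx m)) ∈ W := R4_M hW h2 (by rw [hwt1y]; omega)
  -- t3
  have s1 := R3 hW i u1
  rw [XD_M, pderiv_M, add_tsub_cancel_right] at s1
  rw [apply_add_self, apply_add_ne _ (x0_ne_vx i), hwx0] at s1
  rw [apply_add_ne _ (Ne.symm (x0_ne_vx i)), apply_add_self, hwvx] at s1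
  rw [swap_cancel] at s1
  -- s1 : (a+1) • M (w + e vx i + e vy i) - (σ vx i + 1) • M (w + e x0) ∈ W
  have s2 := R2 hW i u2
  rw [XD_M, pderiv_M, add_tsub_cancel_right] at s2
  rw [apply_add_self, apply_add_ne _ (x0_ne_vy i), hwx0] at s2
  rw [apply_add_ne _ (Ne.symm (x0_ne_vy i)), apply_add_self, hwvy] at s2
  rw [swap_cancel] at s2
  -- s2 : (a+1) • M (w + e vy i + e vx i) + (σ vy i + 1) • M (w + e x0) ∈ W
  have hcomm : w + e (vy i) + e (vx i) = w + e (vx i) + e (vy i) := by rw [add_right_comm]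
  rw [hcomm] at s2
  have hQ : M F (w + e (x0 : SpIdx m)) ∈ W := by
    have hsub := W.sub_mem s2 s1
    have heq : (((a + 1 : ℕ) : F) • M F (w + e (vx i) + e (vy i))
          + ((σ (vy i) + 1 : ℕ) : F) • M F (w + e (x0 : SpIdx m)))
        - (((a + 1 : ℕ) : F) • M F (w + e (vx i) + e (vy i))
          - ((σ (vx i) + 1 : ℕ) : F) • M F (w + e (x0 : SpIdx m)))
        = ((σ (vx i) + σ (vy i) + 2 : ℕ) : F) • M F (w + e (x0 : SpIdx m)) := by
      push_cast
      module
    rw [heq] at hsub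
    exact mem_of_smul_mem (Nat.cast_ne_zero.mpr (by omega)) hsub
  -- t6 : all neighbours
  have hax : ∀ j, M F (w + e (vx j)) ∈ W := by
    intro j
    have hA := R2 hW j hQ
    rw [XD_M, pderiv_M, add_tsub_cancel_right] at hA
    rw [apply_add_self, hwx0] at hA
    rw [apply_add_ne _ (Ne.symm (x0_ne_vy j)), hwvy] at hA
    have hsec : ((σ (vy j) : ℕ) : F) • M F (w + e (x0 : SpIdx m) - e (vy j)) ∈ W := by
      rcases Nat.eq_zero_or_pos (σ (vy j)) with h0 | h0
      · rw [h0]; simp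
      · refine W.smul_mem _ (hrtd (M_mem_rtd ?_))
        have hcoord : 1 ≤ (w + e (x0 : SpIdx m)) (vy j) := by
          rw [apply_add_ne _ (Ne.symm (x0_ne_vy j)), hwvy]; omega
        have := wt_sub_e hcoord
        rw [wt_add, wt_e, hwwt] at this
        omega
    have := extract_add hA hsec
    exact mem_of_smul_mem (Nat.cast_ne_zero.mpr (Nat.succ_ne_zero _)) this
  have hay : ∀ j, M F (w + e (vy j)) ∈ W := by
    intro j
    have hB := R3 hW j hQ
    rw [XD_M, pderiv_M, add_tsub_cancel_right] at hB
    rw [apply_add_self, hwx0] at hB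
    rw [apply_add_ne _ (Ne.symm (x0_ne_vx j)), hwvx] at hB
    have hsec : ((σ (vx j) : ℕ) : F) • M F (w + e (x0 : SpIdx m) - e (vx j)) ∈ W := by
      rcases Nat.eq_zero_or_pos (σ (vx j)) with h0 | h0
      · rw [h0]; simp
      · refine W.smul_mem _ (hrtd (M_mem_rtd ?_))
        have hcoord : 1 ≤ (w + e (x0 : SpIdx m)) (vx j) := by
          rw [apply_add_ne _ (Ne.symm (x0_ne_vx j)), hwvx]; omega
        have := wt_sub_e hcoord
        rw [wt_add, wt_e, hwwt] at this
        omega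
    have := extract_sub hB hsec
    exact mem_of_smul_mem (Nat.cast_ne_zero.mpr (Nat.succ_ne_zero _)) this
  have hQ' : M F (σ + Finsupp.single (x0 : SpIdx m) (a + 1)) ∈ W := by
    have : σ + Finsupp.single (x0 : SpIdx m) (a + 1) = w + e (x0 : SpIdx m) := by
      rw [hw, add_assoc, single_succ]
    rw [this]
    exact hQ
  exact ⟨hax, hay, hQ'⟩

lemma tricky (hrtd : restrictTotalDegree (SpIdx m) F ℓ ≤ W) (σ : SpIdx m →₀ ℕ) (a : ℕ)
    (hs0 : σ (x0 : SpIdx m) = 0) (hwt : wt σ + a = ℓ) (i : Fin m)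
    (h1 : M F (σ + Finsupp.single (x0 : SpIdx m) a + e (vy i)) ∈ W) :
    (∀ j, M F (σ + Finsupp.single (x0 : SpIdx m) a + e (vx j)) ∈ W) ∧
    (∀ j, M F (σ + Finsupp.single (x0 : SpIdx m) a + e (vy j)) ∈ W) ∧
    M F (σ + Finsupp.single (x0 : SpIdx m) (a + 1)) ∈ W := by
  have h8 := R8 hW i i h1
  rw [XD_M, apply_add_self, add_tsub_cancel_right] at h8
  have hx := mem_of_smul_mem (Nat.cast_ne_zero.mpr (Nat.succ_ne_zero _)) (two_smul_extract h8)
  exact trick hW hrtd σ a hs0 hwt i hx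

end StageE

section StageF

variable {ℓ : ℕ} {W : Submodule F (MvPolynomial (SpIdx m) F)}
variable (hW : ∀ T ∈ PiFam F m (-(ℓ : F)), ∀ f ∈ W, T f ∈ W)
include hW

lemma conn (hrtd : restrictTotalDegree (SpIdx m) F ℓ ≤ W) :
    ∀ n : ℕ, ∀ s t : SpIdx m →₀ ℕ, s (x0 : SpIdx m) = 0 → t (x0 : SpIdx m) = 0 →
      wt s = ℓ + 1 → wt t = ℓ + 1 →
      (∑ z : SpIdx m, ((s z - t z) + (t z - s z))) ≤ n → M F s ∈ W → M F t ∈ W := by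
  intro n
  induction n with
  | zero =>
    intro s t _ _ _ _ hm hs
    have hst : s = t := by
      have h0 : ∀ z : SpIdx m, ((s z - t z) + (t z - s z)) = 0 := by
        intro z
        have h1 : (∑ z : SpIdx m, ((s z - t z) + (t z - s z))) = 0 := le_antisymm hm (Nat.zero_le _)
        have := Finset.sum_eq_zero_iff.mp h1 z (Finset.mem_univ z)
        exact this
      ext z
      have := h0 z
      omega
    rwa [hst] at hs
  | succ n ih =>
    intro s t hs0 ht0 hws hwt hm hs
    by_cases hst : s = t
    · rwa [hst] at hs
    have hex1 : ∃ z : SpIdx m, t z < s z := by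
      by_contra hc
      push_neg at hc
      apply hst
      ext z
      rcases Nat.lt_or_ge (s z) (t z) with h | h
      · exfalso
        have : wt s < wt t := by
          rw [wt_eq_sum, wt_eq_sum]
          exact Finset.sum_lt_sum (fun i _ => hc i) ⟨z, Finset.mem_univ z, h⟩
        omega
      · have := hc z; omega
    have hex2 : ∃ z : SpIdx m, s z < t z := by
      by_contra hc
      push_neg at hc
      apply hst
      ext z
      rcases Nat.lt_or_ge (t z) (s z) with h | h
      · exfalso
        have : wt t < wt s := by
          rw [wt_eq_sum, wt_eq_sum]
          exact Finset.sum_lt_sum (fun i _ => hc i) ⟨z, Finset.mem_univ z, h⟩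
        omega
      · have := hc z; omega
    obtain ⟨z, hz⟩ := hex1
    obtain ⟨z', hz'⟩ := hex2
    have hzz' : z ≠ z' := fun hc => by rw [hc] at hz; omega
    have hzx0 : z ≠ (x0 : SpIdx m) := fun hc => by rw [hc] at hz; omega
    have hz'x0 : z' ≠ (x0 : SpIdx m) := fun hc => by rw [hc] at hz'; omega
    have hsz : 1 ≤ s z := by omega
    set σ : SpIdx m →₀ ℕ := s - e z with hσdef
    have hσ0 : σ (x0 : SpIdx m) = 0 := by
      rw [hσdef, apply_sub_ne _ (Ne.symm hzx0), hs0]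
    have hσwt : wt σ + 0 = ℓ := by
      have := wt_sub_e hsz
      rw [← hσdef] at this
      omega
    have hsmem : M F (σ + Finsupp.single (x0 : SpIdx m) 0 + e z) ∈ W := by
      rw [Finsupp.single_zero, add_zero, hσdef, sub_e_add_e hsz]
      exact hs
    have hnext : ∀ q : SpIdx m, q ≠ (x0 : SpIdx m) →
        M F (σ + Finsupp.single (x0 : SpIdx m) 0 + e q) ∈ W := by
      have htrick : (∀ j, M F (σ + Finsupp.single (x0 : SpIdx m) 0 + e (vx j)) ∈ W) ∧
          (∀ j, M F (σ + Finsupp.single (x0 : SpIdx m) 0 + e (vy j)) ∈ W) := by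
        rcases z with j | i
        · rcases Fin.eq_zero_or_eq_succ j with rfl | ⟨i, rfl⟩
          · exact absurd rfl hzx0
          · have h := trick hW hrtd σ 0 hσ0 hσwt i hsmem
            exact ⟨h.1, h.2.1⟩
        · have h := tricky hW hrtd σ 0 hσ0 hσwt i hsmem
          exact ⟨h.1, h.2.1⟩
      intro q hq
      rcases q with j | i
      · rcases Fin.eq_zero_or_eq_succ j with rfl | ⟨i, rfl⟩
        · exact absurd rfl hq
        · exact htrick.1 i
      · exact htrick.2 i
    have hs' : M F (σ + e z') ∈ W := by
      have := hnext z' hz'x0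
      rwa [Finsupp.single_zero, add_zero] at this
    -- apply induction to σ + e z'
    set s' : SpIdx m →₀ ℕ := σ + e z' with hs'def
    have hs'x0 : s' (x0 : SpIdx m) = 0 := by
      rw [hs'def, apply_add_ne _ (Ne.symm hz'x0), hσ0]
    have hs'wt : wt s' = ℓ + 1 := by rw [hs'def, wt_add, wt_e]; omega
    have hcoord : ∀ q : SpIdx m, q ≠ z → q ≠ z' → s' q = s q := by
      intro q h1 h2
      rw [hs'def, apply_add_ne _ h2, hσdef, apply_sub_ne _ h1]
    have hcz : s' z = s z - 1 := by
      rw [hs'def, apply_add_ne _ hzz', hσdef, apply_sub_self]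
    have hcz' : s' z' = s z' + 1 := by
      rw [hs'def, apply_add_self, hσdef, apply_sub_ne _ (Ne.symm hzz')]
    have hm' : (∑ q : SpIdx m, ((s' q - t q) + (t q - s' q))) ≤ n := by
      have hsplit : ∀ u : SpIdx m → ℕ, (∑ q : SpIdx m, u q)
          = u z + (u z' + ∑ q ∈ (Finset.univ.erase z).erase z', u q) := by
        intro u
        rw [Finset.add_sum_erase _ u (Finset.mem_erase.mpr ⟨Ne.symm hzz', Finset.mem_univ z'⟩),
          Finset.add_sum_erase _ u (Finset.mem_univ z)]
      have h1 := hsplit (fun q => (s' q - t q) + (t q - s' q))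
      have h2 := hsplit (fun q => (s q - t q) + (t q - s q))
      have hrest : ∑ q ∈ (Finset.univ.erase z).erase z',
            ((s' q - t q) + (t q - s' q))
          = ∑ q ∈ (Finset.univ.erase z).erase z', ((s q - t q) + (t q - s q)) := by
        refine Finset.sum_congr rfl fun q hq => ?_
        have ha := Finset.mem_erase.mp hq
        have hb := Finset.mem_erase.mp ha.2
        rw [hcoord q hb.1 ha.1]
      rw [h1, hrest, hcz, hcz'] at *
      rw [h2] at hm
      omega
    exact ih s' t hs'x0 ht0 hs'wt hwt hm' hs'

omit hW in
lemma decomp_x0 (s : SpIdx m →₀ ℕ) :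
    s = (s - Finsupp.single (x0 : SpIdx m) (s (x0 : SpIdx m)))
        + Finsupp.single (x0 : SpIdx m) (s (x0 : SpIdx m)) ∧
    (s - Finsupp.single (x0 : SpIdx m) (s (x0 : SpIdx m))) (x0 : SpIdx m) = 0 := by
  constructor
  · ext q
    rw [Finsupp.add_apply, Finsupp.tsub_apply, Finsupp.single_apply]
    by_cases hq : (x0 : SpIdx m) = q
    · subst hq; simp
    · rw [if_neg hq]; omega
  · rw [Finsupp.tsub_apply, Finsupp.single_eq_same]; omega

lemma baseAll (hrtd : restrictTotalDegree (SpIdx m) F ℓ ≤ W) (i1 : Fin m)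
    (hM : M F (Finsupp.single (vx i1 : SpIdx m) (ℓ + 1)) ∈ W) :
    ∀ s : SpIdx m →₀ ℕ, wt s = ℓ + 1 → M F s ∈ W := by
  have hsing0 : (Finsupp.single (vx i1 : SpIdx m) (ℓ + 1)) (x0 : SpIdx m) = 0 := by
    rw [Finsupp.single_apply, if_neg (fun hc => x0_ne_vx i1 hc.symm)]
  have base0 : ∀ s : SpIdx m →₀ ℕ, s (x0 : SpIdx m) = 0 → wt s = ℓ + 1 → M F s ∈ W := by
    intro s h0 hw
    exact conn hW hrtd _ _ s hsing0 h0 (wt_single _ _) hw le_rfl hM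
  -- the x0 ladder
  have KA : ∀ a : ℕ, ∀ σ : SpIdx m →₀ ℕ, σ (x0 : SpIdx m) = 0 → wt σ + a = ℓ + 1 →
      M F (σ + Finsupp.single (x0 : SpIdx m) a) ∈ W := by
    intro a
    induction a with
    | zero =>
      intro σ h0 hw
      rw [Finsupp.single_zero, add_zero]
      exact base0 σ h0 (by omega)
    | succ a ih =>
      intro σ h0 hw
      have h1 : M F (σ + Finsupp.single (x0 : SpIdx m) a + e (vx i1)) ∈ W := by
        have := ih (σ + e (vx i1))
          (by rw [apply_add_ne _ (x0_ne_vx i1), h0])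
          (by rw [wt_add, wt_e]; omega)
        rwa [add_right_comm] at this
      exact (trick hW hrtd σ a h0 (by omega) i1 h1).2.2
  intro s hw
  obtain ⟨hdec, hdec0⟩ := decomp_x0 (m := m) s
  have hwa : wt (s - Finsupp.single (x0 : SpIdx m) (s (x0 : SpIdx m))) + s (x0 : SpIdx m)
      = ℓ + 1 := by
    conv_rhs => rw [← hw]
    conv_rhs => rw [hdec]
    rw [wt_add, wt_single]
  have := KA (s (x0 : SpIdx m)) _ hdec0 hwa
  rwa [← hdec] at this

lemma climb (hrtd : restrictTotalDegree (SpIdx m) F ℓ ≤ W)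
    (base : ∀ s : SpIdx m →₀ ℕ, wt s = ℓ + 1 → M F s ∈ W) :
    ∀ n : ℕ, ∀ s : SpIdx m →₀ ℕ, wt s = ℓ + 1 + n → M F s ∈ W := by
  intro n
  induction n with
  | zero => intro s hw; exact base s (by omega)
  | succ n ih =>
    intro s hw
    have hs0 : s ≠ 0 := fun h0 => by rw [h0] at hw; simp [wt] at hw
    obtain ⟨z, hzmem⟩ := Finsupp.support_nonempty_iff.mpr hs0
    rw [Finsupp.mem_support_iff] at hzmem
    have hz1 : 1 ≤ s z := Nat.one_le_iff_ne_zero.mpr hzmem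
    set ν : SpIdx m →₀ ℕ := s - e z with hν
    have hνs : ν + e z = s := sub_e_add_e hz1
    have hνw : wt ν = ℓ + 1 + n := by
      have := wt_sub_e hz1
      rw [← hν] at this
      omega
    have hνmem : M F ν ∈ W := ih ν hνw
    rcases z with j | i
    · rcases Fin.eq_zero_or_eq_succ j with rfl | ⟨i, rfl⟩
      · have := R4_M hW hνmem (by omega)
        have hx : ν + e (x0 : SpIdx m) = s := hνs
        rwa [hx] at this
      · have h6 := R6 hW i hνmem
        rw [XD_M, DspC_M, mul_smul_comm, X_mul_M, hνw] at h6
        have hfirst : ((ν (vy i) : ℕ) : F) • M F (ν - e (vy i) + e (x0 : SpIdx m)) ∈ W := by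
          rcases Nat.eq_zero_or_pos (ν (vy i)) with h0 | h0
          · rw [h0]; simp
          · refine W.smul_mem _ (ih _ ?_)
            rw [wt_add, wt_e]
            have := wt_sub_e (z := vy i) h0
            omega
        have hsecond := extract_add' h6 hfirst
        have := mem_of_smul_mem (cast_sub_ne _ (by omega)) hsecond
        have hx : ν + e (vx i) = s := hνs
        rwa [hx] at this
    · have h5 := R5 hW i hνmem
      rw [XD_M, DspC_M, mul_smul_comm, X_mul_M, hνw] at h5
      have hfirst : ((ν (vx i) : ℕ) : F) • M F (ν - e (vx i) + e (x0 : SpIdx m)) ∈ W := by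
        rcases Nat.eq_zero_or_pos (ν (vx i)) with h0 | h0
        · rw [h0]; simp
        · refine W.smul_mem _ (ih _ ?_)
          rw [wt_add, wt_e]
          have := wt_sub_e (z := vx i) h0
          omega
      have hsecond := extract_sub' h5 hfirst
      have := mem_of_smul_mem (cast_sub_ne _ (by omega)) hsecond
      have hx : ν + e (vy i) = s := hνs
      rwa [hx] at this

lemma W_eq_top (hrtd : restrictTotalDegree (SpIdx m) F ℓ ≤ W) (i1 : Fin m)
    (hM : M F (Finsupp.single (vx i1 : SpIdx m) (ℓ + 1)) ∈ W) : W = ⊤ := by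
  rw [Submodule.eq_top_iff']
  intro p
  rw [p.as_sum]
  refine Submodule.sum_mem W fun v _ => ?_
  rw [← smul_M]
  refine W.smul_mem _ ?_
  rcases le_or_gt (wt v) ℓ with h | h
  · exact hrtd (M_mem_rtd h)
  · exact climb hW hrtd (baseAll hW hrtd i1 hM) (wt v - ℓ - 1) v (by omega)

end StageF

section Part1

variable {ℓ : ℕ}

lemma wt_sub_le (s : SpIdx m →₀ ℕ) (z : SpIdx m) : wt (s - e z) ≤ wt s := by
  rw [wt_eq_sum, wt_eq_sum]
  refine Finset.sum_le_sum fun q _ => ?_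
  rw [Finsupp.tsub_apply]
  exact Nat.sub_le _ _

lemma rtd_D {s : SpIdx m →₀ ℕ} (h : wt s ≤ ℓ) (z : SpIdx m) :
    pderiv z (M F s) ∈ restrictTotalDegree (SpIdx m) F ℓ := by
  rw [pderiv_M]
  exact Submodule.smul_mem _ _ (M_mem_rtd (le_trans (wt_sub_le s z) h))

lemma rtd_XD {s : SpIdx m →₀ ℕ} (h : wt s ≤ ℓ) (z z' : SpIdx m) :
    X z * pderiv z' (M F s) ∈ restrictTotalDegree (SpIdx m) F ℓ := by
  rw [XD_M]
  rcases Nat.eq_zero_or_pos (s z') with h0 | h0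
  · rw [h0]; simp
  · refine Submodule.smul_mem _ _ (M_mem_rtd ?_)
    rw [wt_add, wt_e]
    have := wt_sub_e (z := z') h0
    omega

lemma rtd_DCX {s : SpIdx m →₀ ℕ} (h : wt s ≤ ℓ) (z : SpIdx m) :
    X z * (Dsp F m (M F s) + (-(ℓ : F)) • M F s) ∈ restrictTotalDegree (SpIdx m) F ℓ := by
  rw [Dsp_M, ← add_smul, mul_smul_comm, X_mul_M]
  rcases Nat.lt_or_ge (wt s) ℓ with h1 | h1
  · refine Submodule.smul_mem _ _ (M_mem_rtd ?_)
    rw [wt_add, wt_e]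
    omega
  · have hwl : wt s = ℓ := by omega
    have hz : ((wt s : ℕ) : F) + -(ℓ : F) = 0 := by rw [hwl]; ring
    rw [hz, zero_smul]
    exact Submodule.zero_mem _

lemma rtd_Dsp {s : SpIdx m →₀ ℕ} (h : wt s ≤ ℓ) :
    Dsp F m (M F s) ∈ restrictTotalDegree (SpIdx m) F ℓ := by
  rw [Dsp_M]
  exact Submodule.smul_mem _ _ (M_mem_rtd h)

lemma part1 : ∀ T ∈ PiFam F m (-(ℓ : F)), ∀ f ∈ restrictTotalDegree (SpIdx m) F ℓ,
    T f ∈ restrictTotalDegree (SpIdx m) F ℓ := by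
  intro T hT f hf
  have hms : ∀ s ∈ f.support, wt s ≤ ℓ :=
    fun s hs => le_trans (wt_le_td hs) ((mem_restrictTotalDegree _ _ _).mp hf)
  have hsum : T f = ∑ s ∈ f.support, coeff s f • T (M F s) := by
    conv_lhs => rw [f.as_sum]
    rw [map_sum]
    refine Finset.sum_congr rfl fun s hs => ?_
    rw [← smul_M, map_smul]
  rw [hsum]
  refine Submodule.sum_mem _ fun s hs => Submodule.smul_mem _ _ ?_
  have h : wt s ≤ ℓ := hms s hs
  clear hsum hms hs hf
  rcases hT with ⟨i, j, rfl⟩ | ⟨i, j, rfl⟩ | ⟨i, j, rfl⟩ | rfl | rfl | ⟨i, rfl⟩ | ⟨i, rfl⟩ |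
    ⟨i, rfl⟩ | ⟨i, rfl⟩ | rfl
  · simp only [mx, my, dx, dy, LinearMap.sub_apply, Module.End.mul_apply,
      LinearMap.mulLeft_apply, Derivation.coeFn_coe]
    exact Submodule.sub_mem _ (rtd_XD h _ _) (rtd_XD h _ _)
  · simp only [mx, my, dx, dy, LinearMap.add_apply, Module.End.mul_apply,
      LinearMap.mulLeft_apply, Derivation.coeFn_coe]
    exact Submodule.add_mem _ (rtd_XD h _ _) (rtd_XD h _ _)
  · simp only [mx, my, dx, dy, LinearMap.add_apply, Module.End.mul_apply,
      LinearMap.mulLeft_apply, Derivation.coeFn_coe]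
    exact Submodule.add_mem _ (rtd_XD h _ _) (rtd_XD h _ _)
  · simp only [dx, LinearMap.neg_apply, Derivation.coeFn_coe]
    exact Submodule.neg_mem _ (rtd_D h _)
  · simp only [mx, dx, dy, Module.End.mul_apply, LinearMap.add_apply, LinearMap.smul_apply,
      Module.End.one_apply, LinearMap.mulLeft_apply, Derivation.coeFn_coe]
    exact rtd_DCX h _
  · simp only [mx, my, dx, dy, LinearMap.sub_apply, Module.End.mul_apply, LinearMap.add_apply,
      LinearMap.smul_apply, Module.End.one_apply, LinearMap.mulLeft_apply, Derivation.coeFn_coe]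
    exact Submodule.sub_mem _ (rtd_XD h _ _) (rtd_DCX h _)
  · simp only [mx, dx, dy, LinearMap.add_apply, Module.End.mul_apply,
      LinearMap.mulLeft_apply, Derivation.coeFn_coe]
    exact Submodule.add_mem _ (rtd_XD h _ _) (rtd_D h _)
  · simp only [my, dx, LinearMap.sub_apply, Module.End.mul_apply,
      LinearMap.mulLeft_apply, Derivation.coeFn_coe]
    exact Submodule.sub_mem _ (rtd_XD h _ _) (rtd_D h _)
  · simp only [mx, dx, dy, LinearMap.add_apply, Module.End.mul_apply, LinearMap.smul_apply,
      Module.End.one_apply, LinearMap.mulLeft_apply, Derivation.coeFn_coe]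
    exact Submodule.add_mem _ (rtd_XD h _ _) (rtd_DCX h _)
  · simp only [mx, dx, LinearMap.add_apply, Module.End.mul_apply, LinearMap.smul_apply,
      Module.End.one_apply, LinearMap.mulLeft_apply, Derivation.coeFn_coe]
    exact Submodule.add_mem _ (Submodule.add_mem _ (rtd_Dsp h) (rtd_XD h _ _))
      (Submodule.smul_mem _ _ (M_mem_rtd h))

end Part1

end S12

/-- for `c = -ℓ` with `ℓ ∈ ℕ`, the subspaces of `A` invariant under every
operator of the family `Π_c` are exactly `{0}`, `A_(ℓ)` and `A`; in particular `A` has a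
composition series of length 2 under `π_{-ℓ}`. -/
theorem stmt_12 (F : Type*) [Field F] [CharZero F] (m : ℕ) (hm : 1 ≤ m) (ℓ : ℕ) :
    (∀ T ∈ PiFam F m (-(ℓ : F)), ∀ f ∈ restrictTotalDegree (SpIdx m) F ℓ,
        T f ∈ restrictTotalDegree (SpIdx m) F ℓ) ∧
    (∀ W : Submodule F (MvPolynomial (SpIdx m) F),
      (∀ T ∈ PiFam F m (-(ℓ : F)), ∀ f ∈ W, T f ∈ W) →
      W = ⊥ ∨ W = restrictTotalDegree (SpIdx m) F ℓ ∨ W = ⊤) := by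
  constructor
  · exact S12.part1
  · intro W hW
    by_cases hbot : W = ⊥
    · exact Or.inl hbot
    right
    obtain ⟨f, hfW, hf0⟩ := Submodule.exists_mem_ne_zero_of_ne_bot hbot
    have h1 : (1 : MvPolynomial (SpIdx m) F) ∈ W :=
      S12.one_mem_aux hW f.totalDegree f hfW hf0 le_rfl
    have hrtd : restrictTotalDegree (SpIdx m) F ℓ ≤ W := S12.rtd_le_W hW h1
    by_cases hle : W ≤ restrictTotalDegree (SpIdx m) F ℓ
    · exact Or.inl (le_antisymm hle hrtd)
    right
    obtain ⟨g, hgW, hg0, hghom⟩ := S12.stageC hW hrtd hle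
    have hM := S12.stageD hW ⟨0, hm⟩ hrtd hgW hg0 hghom
    exact S12.W_eq_top hW hrtd ⟨0, hm⟩ hM
end
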